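/- arXiv:2004.07288 — 3 statements merged into one kernel-verified Lean document; each statement's English description precedes it below -/
import Mathlib

section
/- Given an Osgood modulus η, there exists an Osgood modulus ζ with η(r)/ζ(r) → 0 as r → 0; explicitly, ζ(r) := 2 sup_{t ≤ r} ( η(t) √(∫_t^1 ds/η(s)) ) works: it satisfies ∫_r^1 dt/ζ(t) ≤ (∫_r^1 dt/η(t))^{1/2} for 0 < r < 1, hence ζ is Osgood-dominated in such a way that lim_{r→0} η(r)/ζ(r) = 0. -/
open Set Filter MeasureTheory

noncomputable section

/-- A modulus of continuity. -/
def IsModulus (η : ℝ → ℝ) : Prop :=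
  ContinuousOn η (Set.Ici 0) ∧ MonotoneOn η (Set.Ici 0) ∧
    ConcaveOn ℝ (Set.Ici 0) η ∧ Tendsto η (nhdsWithin 0 (Set.Ioi 0)) (nhds 0) ∧
    ∀ r : ℝ, 0 < r → 0 < η r

/-- The Osgood condition `∫_0^1 dr/η(r) = +∞`. -/
def IsOsgood (η : ℝ → ℝ) : Prop :=
  Tendsto (fun ε : ℝ => ∫ r in ε..1, (η r)⁻¹) (nhdsWithin 0 (Set.Ioi 0)) atTop

namespace WeakOsgood

variable {η : ℝ → ℝ}

/-- `F t = ∫_t^1 ds/η(s)`. -/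
def F (η : ℝ → ℝ) (t : ℝ) : ℝ := ∫ s in t..(1:ℝ), (η s)⁻¹

/-- `g t = η t √(F t)`. -/
def g (η : ℝ → ℝ) (t : ℝ) : ℝ := η t * Real.sqrt (F η t)

theorem eta_pos (hmod : IsModulus η) {t : ℝ} (ht : 0 < t) : 0 < η t :=
  hmod.2.2.2.2 t ht

theorem eta_contAt (hmod : IsModulus η) {t : ℝ} (ht : 0 < t) : ContinuousAt η t :=
  (hmod.1 t (le_of_lt ht)).continuousAt (Ici_mem_nhds ht)

theorem eta_zero (hmod : IsModulus η) : η 0 = 0 := by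
  have h1 : Tendsto η (nhdsWithin 0 (Set.Ioi 0)) (nhds (η 0)) :=
    ((hmod.1 0 (Set.mem_Ici.mpr le_rfl)).mono_left (nhdsWithin_mono _ Ioi_subset_Ici_self))
  exact tendsto_nhds_unique h1 hmod.2.2.2.1

theorem eta_nonneg (hmod : IsModulus η) {t : ℝ} (ht : 0 ≤ t) : 0 ≤ η t := by
  rcases eq_or_lt_of_le ht with h | h
  · rw [← h, eta_zero hmod]
  · exact (eta_pos hmod h).le

theorem inv_contOn (hmod : IsModulus η) :
    ContinuousOn (fun s => (η s)⁻¹) (Set.Ioi 0) := fun t ht =>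
  ((eta_contAt hmod ht).inv₀ (eta_pos hmod ht).ne').continuousWithinAt

theorem intInt (hmod : IsModulus η) {a b : ℝ} (ha : 0 < a) (hb : 0 < b) :
    IntervalIntegrable (fun s => (η s)⁻¹) volume a b := by
  apply ContinuousOn.intervalIntegrable
  apply (inv_contOn hmod).mono
  intro t ht
  rcases ht with ⟨h1, _⟩
  have : min a b ≤ t := h1
  exact lt_of_lt_of_le (lt_min ha hb) this

theorem F_hasDeriv (hmod : IsModulus η) {t : ℝ} (ht : 0 < t) :
    HasDerivAt (F η) (-(η t)⁻¹) t := by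
  set a : ℝ := t / 2 with ha
  have ha0 : 0 < a := by positivity
  have ev : ∀ᶠ u in nhds t, F η u
      = (∫ s in a..(1:ℝ), (η s)⁻¹) - ∫ s in a..u, (η s)⁻¹ := by
    filter_upwards [isOpen_Ioi.mem_nhds (show t ∈ Set.Ioi (0:ℝ) from ht)] with u hu
    have := intervalIntegral.integral_add_adjacent_intervals
      (intInt hmod ha0 hu) (intInt hmod hu one_pos)
    rw [F]; linarith [this]
  have hder : HasDerivAt (fun u => (∫ s in a..(1:ℝ), (η s)⁻¹) - ∫ s in a..u, (η s)⁻¹)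
      (-(η t)⁻¹) t := by
    have h2 : HasDerivAt (fun u => ∫ s in a..u, (η s)⁻¹) ((η t)⁻¹) t := by
      exact intervalIntegral.integral_hasDerivAt_right (intInt hmod ha0 ht)
        (ContinuousOn.stronglyMeasurableAtFilter isOpen_Ioi (inv_contOn hmod) t ht)
        ((eta_contAt hmod ht).inv₀ (eta_pos hmod ht).ne')
    exact h2.const_sub _
  exact hder.congr_of_eventuallyEq ev

theorem F_contAt (hmod : IsModulus η) {t : ℝ} (ht : 0 < t) : ContinuousAt (F η) t :=
  (F_hasDeriv hmod ht).continuousAt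

theorem F_one : F η 1 = 0 := intervalIntegral.integral_same

theorem F_pos (hmod : IsModulus η) {t : ℝ} (ht : t ∈ Set.Ioo (0:ℝ) 1) : 0 < F η t := by
  apply intervalIntegral.intervalIntegral_pos_of_pos_on (intInt hmod ht.1 one_pos)
  · intro x hx
    exact inv_pos.mpr (eta_pos hmod (lt_trans ht.1 hx.1))
  · exact ht.2

theorem F_nonneg (hmod : IsModulus η) {t : ℝ} (ht : 0 < t) (ht1 : t ≤ 1) : 0 ≤ F η t := by
  rcases eq_or_lt_of_le ht1 with h | h
  · rw [h, F_one]
  · exact (F_pos hmod ⟨ht, h⟩).le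

theorem F_nonpos (hmod : IsModulus η) {t : ℝ} (ht : 1 ≤ t) : F η t ≤ 0 := by
  rw [F, intervalIntegral.integral_symm]
  simp only [neg_nonpos]
  apply intervalIntegral.integral_nonneg ht
  intro u hu
  exact (inv_pos.mpr (eta_pos hmod (lt_of_lt_of_le one_pos hu.1))).le

theorem g_nonneg (hmod : IsModulus η) {t : ℝ} (ht : 0 ≤ t) : 0 ≤ g η t :=
  mul_nonneg (eta_nonneg hmod ht) (Real.sqrt_nonneg _)

theorem g_pos (hmod : IsModulus η) {t : ℝ} (ht : t ∈ Set.Ioo (0:ℝ) 1) : 0 < g η t :=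
  mul_pos (eta_pos hmod ht.1) (Real.sqrt_pos.mpr (F_pos hmod ht))

theorem g_eq_zero_of_one_le (hmod : IsModulus η) {t : ℝ} (ht : 1 ≤ t) : g η t = 0 := by
  rw [g, Real.sqrt_eq_zero_of_nonpos (F_nonpos hmod ht), mul_zero]

theorem g_zero (hmod : IsModulus η) : g η 0 = 0 := by
  rw [g, eta_zero hmod, zero_mul]

theorem etaF_le (hmod : IsModulus η) {t : ℝ} (ht : 0 < t) (ht1 : t ≤ 1) :
    η t * F η t ≤ 1 := by
  have hηt := eta_pos hmod ht
  have : F η t ≤ (1 - t) * (η t)⁻¹ := by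
    have h1 : (∫ s in t..(1:ℝ), (η s)⁻¹) ≤ ∫ _s in t..(1:ℝ), (η t)⁻¹ := by
      apply intervalIntegral.integral_mono_on ht1 (intInt hmod ht one_pos)
        intervalIntegrable_const
      intro x hx
      exact inv_anti₀ hηt (hmod.2.1 (le_of_lt ht) (le_trans ht.le hx.1) hx.1)
    simpa [F] using h1
  calc η t * F η t ≤ η t * ((1 - t) * (η t)⁻¹) := by
        exact mul_le_mul_of_nonneg_left this hηt.le
    _ = 1 - t := by field_simp
    _ ≤ 1 := by linarith

theorem g_le_sqrt (hmod : IsModulus η) {t : ℝ} (ht : 0 < t) (ht1 : t ≤ 1) :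
    g η t ≤ Real.sqrt (η t) := by
  have hηt := eta_pos hmod ht
  have h0 : g η t = Real.sqrt (η t * (η t * F η t)) := by
    rw [g, ← mul_assoc, Real.sqrt_mul (by positivity), Real.sqrt_mul_self hηt.le]
  rw [h0]
  apply Real.sqrt_le_sqrt
  calc η t * (η t * F η t) ≤ η t * 1 :=
        mul_le_mul_of_nonneg_left (etaF_le hmod ht ht1) hηt.le
    _ = η t := mul_one _

theorem g_le_sqrt' (hmod : IsModulus η) {t r : ℝ} (ht : 0 < t) (htr : t ≤ r) :
    g η t ≤ Real.sqrt (η r) := by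
  rcases le_or_gt t 1 with h | h
  · exact le_trans (g_le_sqrt hmod ht h)
      (Real.sqrt_le_sqrt (hmod.2.1 ht.le (le_trans ht.le htr) htr))
  · rw [g_eq_zero_of_one_le hmod h.le]
    exact Real.sqrt_nonneg _

theorem g_contAt (hmod : IsModulus η) {t : ℝ} (ht : 0 < t) : ContinuousAt (g η) t :=
  (eta_contAt hmod ht).mul ((Real.continuous_sqrt.continuousAt).comp (F_contAt hmod ht))

theorem sqrtF_hasDeriv (hmod : IsModulus η) {t : ℝ} (ht : t ∈ Set.Ioo (0:ℝ) 1) :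
    HasDerivAt (fun u => Real.sqrt (F η u)) (-(2 * g η t)⁻¹) t := by
  have hF := F_pos hmod ht
  have hη := eta_pos hmod ht.1
  have h : HasDerivAt (fun u => Real.sqrt (F η u)) _ t := (Real.hasDerivAt_sqrt hF.ne').comp t (F_hasDeriv hmod ht.1)
  convert h using 1
  have hs : 0 < Real.sqrt (F η t) := Real.sqrt_pos.mpr hF
  rw [g]
  field_simp

theorem invg_contOn (hmod : IsModulus η) {a b : ℝ} (ha : 0 < a) (hb : b < 1) :
    ContinuousOn (fun t => (2 * g η t)⁻¹) (Set.Icc a b) := by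
  intro t ht
  have ht' : t ∈ Set.Ioo (0:ℝ) 1 := ⟨lt_of_lt_of_le ha ht.1, lt_of_le_of_lt ht.2 hb⟩
  have h1 : ContinuousAt (fun t => 2 * g η t) t := continuousAt_const.mul (g_contAt hmod ht'.1)
  exact (h1.inv₀ (by have := g_pos hmod ht'; positivity)).continuousWithinAt

theorem u_sub (hmod : IsModulus η) {a b : ℝ} (ha : 0 < a) (hab : a ≤ b) (hb : b < 1) :
    Real.sqrt (F η a) - Real.sqrt (F η b) = ∫ t in a..b, (2 * g η t)⁻¹ := by
  have huIcc : Set.uIcc a b = Set.Icc a b := Set.uIcc_of_le hab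
  have key : ∀ t ∈ Set.uIcc a b,
      HasDerivAt (fun u => -Real.sqrt (F η u)) ((2 * g η t)⁻¹) t := by
    intro t ht
    rw [huIcc] at ht
    have ht' : t ∈ Set.Ioo (0:ℝ) 1 := ⟨lt_of_lt_of_le ha ht.1, lt_of_le_of_lt ht.2 hb⟩
    simpa [Pi.neg_def] using (sqrtF_hasDeriv hmod ht').neg
  have hint : IntervalIntegrable (fun t => (2 * g η t)⁻¹) volume a b := by
    apply ContinuousOn.intervalIntegrable
    rw [huIcc]
    exact invg_contOn hmod ha hb
  have := intervalIntegral.integral_eq_sub_of_hasDerivAt key hint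
  rw [this]
  ring

theorem sqrtF_antitone (hmod : IsModulus η) {a b : ℝ} (ha : 0 < a) (hab : a ≤ b) :
    Real.sqrt (F η b) ≤ Real.sqrt (F η a) := by
  rcases lt_or_ge b 1 with hb | hb
  · have h := u_sub hmod ha hab hb
    have hnn : 0 ≤ ∫ t in a..b, (2 * g η t)⁻¹ := by
      apply intervalIntegral.integral_nonneg hab
      intro u hu
      have : 0 ≤ g η u := g_nonneg hmod (le_trans ha.le hu.1)
      positivity
    linarith
  · rw [Real.sqrt_eq_zero_of_nonpos (F_nonpos hmod hb)]
    exact Real.sqrt_nonneg _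


theorem g_concave_core (hmod : IsModulus η) {x y a b : ℝ} (hx : x ∈ Set.Ioo (0:ℝ) 1)
    (hy : y ∈ Set.Ioo (0:ℝ) 1) (hxy : x < y) (ha0 : 0 < a) (hb0 : 0 < b) (hab : a + b = 1) :
    a * g η x + b * g η y ≤ g η (a * x + b * y) := by
  set m := a * x + b * y with hm
  have ha' : a = 1 - b := by linarith
  have hxm : x < m := by
    have h0 : m - x = b * (y - x) := by rw [hm, ha']; ring
    nlinarith [mul_pos hb0 (sub_pos.mpr hxy)]
  have hmy : m < y := by
    have h0 : y - m = a * (y - x) := by rw [hm, ha']; ring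
    nlinarith [mul_pos ha0 (sub_pos.mpr hxy)]
  have hm0 : 0 < m := lt_trans hx.1 hxm
  have hm1 : m < 1 := lt_trans hmy hy.2
  set u : ℝ → ℝ := fun t => Real.sqrt (F η t) with hu
  have hUm : 0 < u m := Real.sqrt_pos.mpr (F_pos hmod ⟨hm0, hm1⟩)
  have hEx : 0 < η x := eta_pos hmod hx.1
  have hEy : 0 < η y := eta_pos hmod hy.1
  -- concavity of η
  have h1 : a * η x + b * η y ≤ η m := by
    have := hmod.2.2.1.2 (Set.mem_Ici.mpr hx.1.le) (Set.mem_Ici.mpr hy.1.le)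
      ha0.le hb0.le hab
    simpa [smul_eq_mul] using this
  -- upper bound for u x - u m
  have e3 : η x * (u x - u m) ≤ (m - x) / (2 * u m) := by
    have hsub : u x - u m = ∫ t in x..m, (2 * g η t)⁻¹ := u_sub hmod hx.1 hxm.le hm1
    have hint : IntervalIntegrable (fun t => (2 * g η t)⁻¹) volume x m :=
      ((invg_contOn hmod hx.1 hm1).mono (by rw [Set.uIcc_of_le hxm.le])).intervalIntegrable
    have hmono : (∫ t in x..m, (2 * g η t)⁻¹) ≤ ∫ _t in x..m, (2 * (η x * u m))⁻¹ := by
      apply intervalIntegral.integral_mono_on hxm.le hint intervalIntegrable_const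
      intro t ht
      have ht' : t ∈ Set.Ioo (0:ℝ) 1 := ⟨lt_of_lt_of_le hx.1 ht.1, lt_of_le_of_lt ht.2 hm1⟩
      apply inv_anti₀ (by positivity)
      have hηt : η x ≤ η t := hmod.2.1 hx.1.le (le_trans hx.1.le ht.1) ht.1
      have hut : u m ≤ u t := sqrtF_antitone hmod ht'.1 ht.2
      have hut0 : 0 ≤ u t := Real.sqrt_nonneg _
      rw [g]
      nlinarith
    rw [hsub]
    calc η x * ∫ t in x..m, (2 * g η t)⁻¹ ≤ η x * ((m - x) * (2 * (η x * u m))⁻¹) := by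
          apply mul_le_mul_of_nonneg_left _ hEx.le
          rw [intervalIntegral.integral_const, smul_eq_mul] at hmono
          exact hmono
      _ = (m - x) / (2 * u m) := by field_simp
  -- lower bound for u m - u y
  have e4 : (y - m) / (2 * u m) ≤ η y * (u m - u y) := by
    have hsub : u m - u y = ∫ t in m..y, (2 * g η t)⁻¹ := u_sub hmod hm0 hmy.le hy.2
    have hint : IntervalIntegrable (fun t => (2 * g η t)⁻¹) volume m y :=
      ((invg_contOn hmod hm0 hy.2).mono (by rw [Set.uIcc_of_le hmy.le])).intervalIntegrable
    have hmono : (∫ _t in m..y, (2 * (η y * u m))⁻¹) ≤ ∫ t in m..y, (2 * g η t)⁻¹ := by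
      apply intervalIntegral.integral_mono_on hmy.le intervalIntegrable_const hint
      intro t ht
      have ht' : t ∈ Set.Ioo (0:ℝ) 1 := ⟨lt_of_lt_of_le hm0 ht.1, lt_of_le_of_lt ht.2 hy.2⟩
      have hgt : 0 < g η t := g_pos hmod ht'
      apply inv_anti₀ (by positivity)
      have hηt : η t ≤ η y := hmod.2.1 (le_trans hm0.le ht.1) hy.1.le ht.2
      have hut : u t ≤ u m := sqrtF_antitone hmod hm0 ht.1
      have hut0 : 0 ≤ u t := Real.sqrt_nonneg _
      rw [g]
      nlinarith
    rw [hsub]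
    calc (y - m) / (2 * u m) = η y * ((y - m) * (2 * (η y * u m))⁻¹) := by field_simp
      _ ≤ η y * ∫ t in m..y, (2 * g η t)⁻¹ := by
          apply mul_le_mul_of_nonneg_left _ hEy.le
          rw [intervalIntegral.integral_const, smul_eq_mul] at hmono
          exact hmono
  have hkey : a * (m - x) = b * (y - m) := by
    have hb' : b = 1 - a := by linarith
    rw [hm, hb']; ring
  have ha3 : a * (η x * (u x - u m)) ≤ a * ((m - x) / (2 * u m)) :=
    mul_le_mul_of_nonneg_left e3 ha0.le
  have hb4 : b * ((y - m) / (2 * u m)) ≤ b * (η y * (u m - u y)) :=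
    mul_le_mul_of_nonneg_left e4 hb0.le
  have heq : a * ((m - x) / (2 * u m)) = b * ((y - m) / (2 * u m)) := by
    rw [← mul_div_assoc, ← mul_div_assoc, hkey]
  have h1' : (a * η x + b * η y) * u m ≤ η m * u m := mul_le_mul_of_nonneg_right h1 hUm.le
  have hgm : g η m = η m * u m := rfl
  have hgx : g η x = η x * u x := rfl
  have hgy : g η y = η y * u y := rfl
  rw [hgm, hgx, hgy]
  nlinarith [ha3, hb4, heq, h1']

/-- key concavity inequality for `g` on `(0,1)`. -/
theorem g_concave_combo (hmod : IsModulus η) {x y a b : ℝ} (hx : x ∈ Set.Ioo (0:ℝ) 1)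
    (hy : y ∈ Set.Ioo (0:ℝ) 1) (ha : 0 ≤ a) (hb : 0 ≤ b) (hab : a + b = 1) :
    a * g η x + b * g η y ≤ g η (a * x + b * y) := by
  -- reduce to the case x ≤ y, a,b > 0, x < y
  rcases eq_or_lt_of_le ha with ha0 | ha0
  · rw [← ha0] at hab ⊢; simp at hab; simp [hab, ← ha0]
  rcases eq_or_lt_of_le hb with hb0 | hb0
  · rw [← hb0] at hab ⊢; simp at hab; simp [hab, ← hb0]
  rcases eq_or_ne x y with hxy | hxy
  · subst hxy
    have : a * x + b * x = x := by rw [← add_mul, hab, one_mul]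
    rw [this]; nlinarith [g_nonneg hmod hx.1.le]
  rcases lt_or_gt_of_ne hxy with h | h
  · exact g_concave_core hmod hx hy h ha0 hb0 hab
  · have := g_concave_core hmod hy hx h hb0 ha0 (by linarith)
    calc a * g η x + b * g η y = b * g η y + a * g η x := by ring
      _ ≤ g η (b * y + a * x) := this
      _ = g η (a * x + b * y) := by rw [add_comm]

theorem g_mono_aux (hmod : IsModulus η) {s r w : ℝ} (hs : 0 < s) (hsr : s ≤ r)
    (hrw : r ≤ w) (hw1 : w < 1) (hgw : g η s ≤ g η w) : g η s ≤ g η r := by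
  rcases eq_or_lt_of_le hsr with h | hsr'
  · rw [← h]
  rcases eq_or_lt_of_le hrw with h | hrw'
  · rw [h]; exact hgw
  have hws : 0 < w - s := by linarith
  set a : ℝ := (w - r) / (w - s) with ha
  set b : ℝ := 1 - a with hb
  have ha0 : 0 < a := by apply div_pos <;> linarith
  have ha1 : a < 1 := by rw [ha, div_lt_one hws]; linarith
  have hb0 : 0 < b := by rw [hb]; linarith
  have hr : a * s + b * w = r := by rw [hb, ha]; field_simp; ring
  have hcomb := g_concave_combo hmod (show s ∈ Set.Ioo (0:ℝ) 1 from ⟨hs, by linarith⟩)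
    (show w ∈ Set.Ioo (0:ℝ) 1 from ⟨by linarith, hw1⟩) ha0.le hb0.le (by rw [hb]; ring)
  rw [hr] at hcomb
  have hsum : a * g η s + b * g η s = g η s := by rw [hb]; ring
  linarith [hcomb, mul_le_mul_of_nonneg_left hgw hb0.le]

theorem g_scale (hmod : IsModulus η) {s b : ℝ} (hs0 : 0 < s) (hs1 : s < 1)
    (hb0 : 0 < b) (hb1 : b ≤ 1) : b * g η s ≤ g η (b * s) := by
  have hbs0 : 0 < b * s := mul_pos hb0 hs0
  have hbs : b * s ≤ s := by nlinarith
  have hη : b * η s ≤ η (b * s) := by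
    have := hmod.2.2.1.2 (Set.mem_Ici.mpr hs0.le) (Set.mem_Ici.mpr (le_refl (0:ℝ)))
      hb0.le (by linarith : (0:ℝ) ≤ 1 - b) (by ring)
    simpa [smul_eq_mul, eta_zero hmod] using this
  have hu : Real.sqrt (F η s) ≤ Real.sqrt (F η (b * s)) := sqrtF_antitone hmod hbs0 hbs
  have hu0 : 0 ≤ Real.sqrt (F η s) := Real.sqrt_nonneg _
  have hη0 : 0 < η s := eta_pos hmod hs0
  have hgbs : g η (b * s) = η (b * s) * Real.sqrt (F η (b * s)) := rfl
  have hgs : g η s = η s * Real.sqrt (F η s) := rfl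
  rw [hgbs, hgs]
  have hub0 : 0 ≤ Real.sqrt (F η (b * s)) := Real.sqrt_nonneg _
  nlinarith [mul_le_mul_of_nonneg_right hη hub0, mul_le_mul_of_nonneg_left hu (by positivity : 0 ≤ b * η s)]

theorem g_contOn_Icc (hmod : IsModulus η) : ContinuousOn (g η) (Set.Icc 0 1) := by
  intro t ht
  rcases eq_or_lt_of_le ht.1 with h | h
  · -- t = 0
    rw [← h]
    have h0 : g η 0 = 0 := g_zero hmod
    rw [ContinuousWithinAt, h0]
    apply squeeze_zero' (f := g η) (g := fun r => Real.sqrt (η r))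
    · filter_upwards [self_mem_nhdsWithin] with r hr
      exact g_nonneg hmod hr.1
    · filter_upwards [self_mem_nhdsWithin] with r hr
      rcases eq_or_lt_of_le hr.1 with h1 | h1
      · rw [← h1, g_zero hmod, eta_zero hmod, Real.sqrt_zero]
      · exact g_le_sqrt' hmod h1 le_rfl
    · have hη : Tendsto η (nhdsWithin 0 (Set.Icc 0 1)) (nhds (η 0)) :=
        (hmod.1 0 (Set.mem_Ici.mpr le_rfl)).mono_left
          (nhdsWithin_mono _ (fun x hx => hx.1))
      have := (Real.continuous_sqrt.continuousAt (x := η 0)).tendsto.comp hη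
      rwa [eta_zero hmod, Real.sqrt_zero] at this
  · exact (g_contAt hmod h).continuousWithinAt

theorem exists_gmax (hmod : IsModulus η) :
    ∃ c ∈ Set.Ioo (0:ℝ) 1, ∀ t, 0 < t → g η t ≤ g η c := by
  obtain ⟨c, hc, hmax⟩ := isCompact_Icc.exists_isMaxOn (Set.nonempty_Icc.mpr zero_le_one)
    (g_contOn_Icc hmod)
  have hhalf : 0 < g η (1/2 : ℝ) := g_pos hmod (by norm_num)
  have hgc : 0 < g η c := lt_of_lt_of_le hhalf (hmax (by norm_num : (1/2:ℝ) ∈ Set.Icc 0 1))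
  have hc0 : 0 < c := by
    rcases eq_or_lt_of_le hc.1 with h | h
    · exfalso; rw [← h, g_zero hmod] at hgc; exact lt_irrefl 0 hgc
    · exact h
  have hc1 : c < 1 := by
    rcases eq_or_lt_of_le hc.2 with h | h
    · exfalso; rw [h, g_eq_zero_of_one_le hmod le_rfl] at hgc; exact lt_irrefl 0 hgc
    · exact h
  refine ⟨c, ⟨hc0, hc1⟩, fun t ht => ?_⟩
  rcases le_or_gt t 1 with h | h
  · exact hmax (Set.mem_Icc.mpr ⟨ht.le, h⟩)
  · rw [g_eq_zero_of_one_le hmod h.le]; exact hgc.le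

theorem sup_eq (hmod : IsModulus η) {c : ℝ} (hc : c ∈ Set.Ioo (0:ℝ) 1)
    (hmax : ∀ t, 0 < t → g η t ≤ g η c) {r : ℝ} (hr : 0 < r) :
    sSup (g η '' Set.Ioc 0 r) = g η (min r c) := by
  rcases le_or_gt r c with h | h
  · rw [min_eq_left h]
    apply IsGreatest.csSup_eq
    constructor
    · exact ⟨r, ⟨hr, le_rfl⟩, rfl⟩
    · rintro x ⟨t, ht, rfl⟩
      exact g_mono_aux hmod ht.1 ht.2 h hc.2 (hmax t ht.1)
  · rw [min_eq_right h.le]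
    apply IsGreatest.csSup_eq
    constructor
    · exact ⟨c, ⟨hc.1, h.le⟩, rfl⟩
    · rintro x ⟨t, ht, rfl⟩
      exact hmax t ht.1

theorem sqrt_tendsto_atTop : Tendsto Real.sqrt atTop atTop := by
  rw [tendsto_atTop]
  intro b
  filter_upwards [eventually_ge_atTop (b ^ 2)] with x h1
  calc b ≤ |b| := le_abs_self b
    _ = Real.sqrt (b ^ 2) := (Real.sqrt_sq_eq_abs b).symm
    _ ≤ Real.sqrt x := Real.sqrt_le_sqrt h1

end WeakOsgood

open WeakOsgood in
/-- Given an Osgood modulus `η`, the explicit choice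
`ζ(r) := 2 sup_{t ≤ r} ( η(t) √(∫_t^1 ds/η(s)) )` is again an Osgood modulus, it satisfies
`∫_r^1 dt/ζ(t) ≤ (∫_r^1 dt/η(t))^{1/2}` for `0 < r < 1`, and it strictly dominates `η`:
`η(r)/ζ(r) → 0` as `r → 0⁺`. -/
theorem exists_weaker_osgood_modulus (η : ℝ → ℝ) (hmod : IsModulus η) (hosg : IsOsgood η) :
    ∃ ζ : ℝ → ℝ,
      (ζ = fun r => 2 * sSup ((fun t => η t * Real.sqrt (∫ s in t..(1:ℝ), (η s)⁻¹)) ''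
        Set.Ioc (0:ℝ) r)) ∧
      IsModulus ζ ∧ IsOsgood ζ ∧
      (∀ r ∈ Set.Ioo (0:ℝ) 1,
        (∫ t in r..(1:ℝ), (ζ t)⁻¹) ≤ Real.sqrt (∫ t in r..(1:ℝ), (η t)⁻¹)) ∧
      Tendsto (fun r => η r / ζ r) (nhdsWithin 0 (Set.Ioi 0)) (nhds 0) := by
  classical
  obtain ⟨c, hc, hmax⟩ := exists_gmax hmod
  set ζ : ℝ → ℝ := fun r => 2 * sSup ((fun t => η t * Real.sqrt (∫ s in t..(1:ℝ), (η s)⁻¹)) ''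
        Set.Ioc (0:ℝ) r) with hζdef
  have himg : ∀ r : ℝ, ((fun t => η t * Real.sqrt (∫ s in t..(1:ℝ), (η s)⁻¹)) ''
      Set.Ioc (0:ℝ) r) = g η '' Set.Ioc 0 r := fun r => rfl
  have hζ : ∀ r : ℝ, 0 < r → ζ r = 2 * g η (min r c) := by
    intro r hr
    rw [hζdef]
    simp only
    rw [himg, sup_eq hmod hc hmax hr]
  have hζ0 : ζ 0 = 0 := by
    rw [hζdef]
    simp [Set.Ioc_self, Real.sSup_empty]
  have hminIoo : ∀ r : ℝ, 0 < r → min r c ∈ Set.Ioo (0:ℝ) 1 :=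
    fun r hr => ⟨lt_min hr hc.1, lt_of_le_of_lt (min_le_right r c) hc.2⟩
  have hζpos : ∀ r : ℝ, 0 < r → 0 < ζ r := by
    intro r hr
    rw [hζ r hr]
    have := g_pos hmod (hminIoo r hr)
    positivity
  have hζnonneg : ∀ r : ℝ, 0 ≤ r → 0 ≤ ζ r := by
    intro r hr
    rcases eq_or_lt_of_le hr with h | h
    · rw [← h, hζ0]
    · exact (hζpos r h).le
  have hmono : MonotoneOn ζ (Set.Ici 0) := by
    intro x hx y hy hxy
    rcases eq_or_lt_of_le (Set.mem_Ici.mp hx) with h | h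
    · rw [← h, hζ0]
      exact hζnonneg y hy
    · have hy' : 0 < y := lt_of_lt_of_le h hxy
      rw [hζ x h, hζ y hy']
      have hgle : g η (min x c) ≤ g η (min y c) :=
        g_mono_aux hmod (hminIoo x h).1 (min_le_min hxy le_rfl) (min_le_right y c)
          hc.2 (hmax _ (hminIoo x h).1)
      linarith
  have hub : ∀ r : ℝ, 0 ≤ r → ζ r ≤ 2 * Real.sqrt (η r) := by
    intro r hr
    rcases eq_or_lt_of_le hr with h | h
    · rw [← h, hζ0]
      positivity
    · rw [hζ r h]
      have := g_le_sqrt' hmod (hminIoo r h).1 (min_le_left r c)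
      linarith
  have hζcontAt : ∀ r : ℝ, 0 < r → ContinuousAt ζ r := by
    intro r hr
    have hca : ContinuousAt (fun x => 2 * g η (min x c)) r := by
      apply continuousAt_const.mul
      have hmin : ContinuousAt (fun x : ℝ => min x c) r :=
        (continuous_id.min continuous_const).continuousAt
      have : ContinuousAt ((g η) ∘ (fun x : ℝ => min x c)) r :=
        ContinuousAt.comp (g_contAt hmod (hminIoo r hr).1) hmin
      exact this
    apply hca.congr
    filter_upwards [isOpen_Ioi.mem_nhds (Set.mem_Ioi.mpr hr)] with u hu
    exact (hζ u hu).symm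
  have hcont0 : Tendsto ζ (nhdsWithin 0 (Set.Ici 0)) (nhds 0) := by
    apply squeeze_zero' (g := fun r => 2 * Real.sqrt (η r))
    · filter_upwards [self_mem_nhdsWithin] with u hu
      exact hζnonneg u hu
    · filter_upwards [self_mem_nhdsWithin] with u hu
      exact hub u hu
    · have hη : Tendsto η (nhdsWithin 0 (Set.Ici 0)) (nhds (η 0)) :=
        hmod.1 0 (Set.mem_Ici.mpr le_rfl)
      have h2 := ((Real.continuous_sqrt.continuousAt (x := η 0)).tendsto.comp hη).const_mul 2
      rwa [eta_zero hmod, Real.sqrt_zero, mul_zero] at h2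
  have hcont : ContinuousOn ζ (Set.Ici 0) := by
    intro r hr
    rcases eq_or_lt_of_le (Set.mem_Ici.mp hr) with h | h
    · rw [ContinuousWithinAt, ← h, hζ0]
      exact hcont0
    · exact (hζcontAt r h).continuousWithinAt
  have ht0 : Tendsto ζ (nhdsWithin 0 (Set.Ioi 0)) (nhds 0) :=
    hcont0.mono_left (nhdsWithin_mono _ Ioi_subset_Ici_self)
  -- concavity
  have hconc : ConcaveOn ℝ (Set.Ici 0) ζ := by
    refine ⟨convex_Ici 0, ?_⟩
    intro x hx y hy a b ha hb hab
    simp only [smul_eq_mul]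
    rcases eq_or_lt_of_le ha with ha0 | ha0
    · have hb1 : b = 1 := by linarith
      rw [← ha0, hb1]; simp
    rcases eq_or_lt_of_le hb with hb0 | hb0
    · have ha1 : a = 1 := by linarith
      rw [← hb0, ha1]; simp
    have hb1 : b ≤ 1 := by linarith
    have ha1 : a ≤ 1 := by linarith
    rcases eq_or_lt_of_le (Set.mem_Ici.mp hx) with hx0 | hx0
    · rcases eq_or_lt_of_le (Set.mem_Ici.mp hy) with hy0 | hy0
      · rw [← hx0, ← hy0]; simp [hζ0]
      · -- x = 0, y > 0
        rw [← hx0, hζ0]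
        simp only [mul_zero, zero_add]
        have hby : 0 < b * y := mul_pos hb0 hy0
        rw [hζ y hy0, hζ (b * y) hby]
        have hmy := hminIoo y hy0
        have h1 : b * g η (min y c) ≤ g η (b * min y c) :=
          g_scale hmod hmy.1 hmy.2 hb0 hb1
        have h2 : g η (b * min y c) ≤ g η (min (b * y) c) := by
          apply g_mono_aux hmod (mul_pos hb0 hmy.1) _ (min_le_right _ _) hc.2
            (hmax _ (mul_pos hb0 hmy.1))
          apply le_min
          · exact mul_le_mul_of_nonneg_left (min_le_left y c) hb0.le
          · calc b * min y c ≤ 1 * min y c :=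
                  mul_le_mul_of_nonneg_right hb1 (le_min hy0.le hc.1.le)
              _ = min y c := one_mul _
              _ ≤ c := min_le_right _ _
        linarith
    rcases eq_or_lt_of_le (Set.mem_Ici.mp hy) with hy0 | hy0
    · -- y = 0, x > 0
      rw [← hy0, hζ0]
      simp only [mul_zero, add_zero]
      have hax : 0 < a * x := mul_pos ha0 hx0
      rw [hζ x hx0, hζ (a * x) hax]
      have hmx := hminIoo x hx0
      have h1 : a * g η (min x c) ≤ g η (a * min x c) :=
        g_scale hmod hmx.1 hmx.2 ha0 ha1
      have h2 : g η (a * min x c) ≤ g η (min (a * x) c) := by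
        apply g_mono_aux hmod (mul_pos ha0 hmx.1) _ (min_le_right _ _) hc.2
          (hmax _ (mul_pos ha0 hmx.1))
        apply le_min
        · exact mul_le_mul_of_nonneg_left (min_le_left x c) ha0.le
        · calc a * min x c ≤ 1 * min x c :=
                mul_le_mul_of_nonneg_right ha1 (le_min hx0.le hc.1.le)
            _ = min x c := one_mul _
            _ ≤ c := min_le_right _ _
      linarith
    · -- x, y > 0
      have hxy0 : 0 < a * x + b * y := by
        have := mul_pos ha0 hx0
        have := mul_pos hb0 hy0
        linarith
      rw [hζ x hx0, hζ y hy0, hζ _ hxy0]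
      set s1 := min x c with hs1
      set s2 := min y c with hs2
      have hms1 := hminIoo x hx0
      have hms2 := hminIoo y hy0
      have hcomb := g_concave_combo hmod hms1 hms2 ha hb hab
      have hm0 : 0 < a * s1 + b * s2 := by
        have := mul_pos ha0 hms1.1
        have := mul_pos hb0 hms2.1
        linarith
      have h2 : g η (a * s1 + b * s2) ≤ g η (min (a * x + b * y) c) := by
        apply g_mono_aux hmod hm0 _ (min_le_right _ _) hc.2 (hmax _ hm0)
        apply le_min
        · have h1 := mul_le_mul_of_nonneg_left (min_le_left x c) ha
          have h2 := mul_le_mul_of_nonneg_left (min_le_left y c) hb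
          linarith
        · have h1 := mul_le_mul_of_nonneg_left (min_le_right x c) ha
          have h2 := mul_le_mul_of_nonneg_left (min_le_right y c) hb
          have hsum : a * c + b * c = c := by rw [← add_mul, hab, one_mul]
          linarith
      linarith
  have hmodζ : IsModulus ζ := ⟨hcont, hmono, hconc, ht0, hζpos⟩
  -- pointwise lower bound
  have hζge : ∀ t : ℝ, 0 < t → 2 * g η t ≤ ζ t := by
    intro t ht
    rw [hζ t ht]
    rcases le_or_gt t c with h | h
    · rw [min_eq_left h]
    · rw [min_eq_right h.le]
      linarith [hmax t ht]
  have hζeqg : ∀ t : ℝ, 0 < t → t ≤ c → ζ t = 2 * g η t := by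
    intro t ht htc
    rw [hζ t ht, min_eq_left htc]
  have hζinv_int : ∀ p q : ℝ, 0 < p → 0 < q →
      IntervalIntegrable (fun t => (ζ t)⁻¹) volume p q := by
    intro p q hp hq
    apply ContinuousOn.intervalIntegrable
    intro t ht
    have ht0 : 0 < t := lt_of_lt_of_le (lt_min hp hq) ht.1
    exact ((hζcontAt t ht0).inv₀ (hζpos t ht0).ne').continuousWithinAt
  -- the main integral estimate
  have hbound : ∀ r : ℝ, r ∈ Set.Ioo (0:ℝ) 1 →
      (∫ t in r..(1:ℝ), (ζ t)⁻¹) ≤ Real.sqrt (F η r) := by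
    intro r hr
    have hr0 := hr.1
    have hr1 := hr.2
    have hstep : ∀ d ∈ Set.Ioo r 1, (∫ t in r..(1:ℝ), (ζ t)⁻¹)
        ≤ Real.sqrt (F η r) - Real.sqrt (F η d) + (1 - d) * (ζ r)⁻¹ := by
      intro d hd
      have hd0 : 0 < d := lt_trans hr0 hd.1
      have hadd : (∫ t in r..d, (ζ t)⁻¹) + (∫ t in d..(1:ℝ), (ζ t)⁻¹)
          = ∫ t in r..(1:ℝ), (ζ t)⁻¹ :=
        intervalIntegral.integral_add_adjacent_intervals (hζinv_int r d hr0 hd0)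
          (hζinv_int d 1 hd0 one_pos)
      have hb1 : (∫ t in r..d, (ζ t)⁻¹) ≤ ∫ t in r..d, (2 * g η t)⁻¹ := by
        apply intervalIntegral.integral_mono_on hd.1.le (hζinv_int r d hr0 hd0)
          ((invg_contOn hmod hr0 hd.2).mono
            (by rw [Set.uIcc_of_le hd.1.le])).intervalIntegrable
        intro t ht
        have ht0 : 0 < t := lt_of_lt_of_le hr0 ht.1
        have htIoo : t ∈ Set.Ioo (0:ℝ) 1 := ⟨ht0, lt_of_le_of_lt ht.2 hd.2⟩
        exact inv_anti₀ (by have := g_pos hmod htIoo; positivity) (hζge t ht0)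
      have heq1 : (∫ t in r..d, (2 * g η t)⁻¹)
          = Real.sqrt (F η r) - Real.sqrt (F η d) :=
        (u_sub hmod hr0 hd.1.le hd.2).symm
      have hb2 : (∫ t in d..(1:ℝ), (ζ t)⁻¹) ≤ (1 - d) * (ζ r)⁻¹ := by
        have h3 : (∫ t in d..(1:ℝ), (ζ t)⁻¹) ≤ ∫ _t in d..(1:ℝ), (ζ r)⁻¹ := by
          apply intervalIntegral.integral_mono_on hd.2.le (hζinv_int d 1 hd0 one_pos)
            intervalIntegrable_const
          intro t ht
          exact inv_anti₀ (hζpos r hr0)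
            (hmono (Set.mem_Ici.mpr hr0.le) (Set.mem_Ici.mpr (le_trans hd0.le ht.1))
              (le_trans hd.1.le ht.1))
        rw [intervalIntegral.integral_const, smul_eq_mul] at h3
        exact h3
      linarith
    have hsq1 : ContinuousAt (fun d => Real.sqrt (F η d)) 1 := by
      have h : ContinuousAt (Real.sqrt ∘ F η) 1 :=
        (Real.continuous_sqrt.continuousAt).comp (F_contAt hmod one_pos)
      exact h
    have hlim : Tendsto (fun d => Real.sqrt (F η r) - Real.sqrt (F η d) + (1 - d) * (ζ r)⁻¹)
        (nhdsWithin 1 (Set.Iio 1)) (nhds (Real.sqrt (F η r))) := by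
      have h2 : Tendsto
          (fun d : ℝ => Real.sqrt (F η r) - Real.sqrt (F η d) + (1 - d) * (ζ r)⁻¹)
          (nhds 1)
          (nhds (Real.sqrt (F η r) - Real.sqrt (F η 1) + (1 - 1) * (ζ r)⁻¹)) :=
        (tendsto_const_nhds.sub hsq1.tendsto).add
          ((tendsto_const_nhds.sub tendsto_id).mul tendsto_const_nhds)
      rw [F_one, Real.sqrt_zero] at h2
      have h3 := h2.mono_left (nhdsWithin_le_nhds (s := Set.Iio (1:ℝ)))
      simpa using h3
    apply ge_of_tendsto hlim
    filter_upwards [Ioo_mem_nhdsLT_of_mem (Set.mem_Ioc.mpr ⟨hr1, le_rfl⟩)] with d hd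
    exact hstep d hd
  -- Osgood for ζ
  have hosgζ : IsOsgood ζ := by
    have hsqF : Tendsto (fun ε => Real.sqrt (F η ε)) (nhdsWithin 0 (Set.Ioi 0)) atTop :=
      sqrt_tendsto_atTop.comp hosg
    have hfat : Tendsto (fun ε => Real.sqrt (F η ε) - Real.sqrt (F η c))
        (nhdsWithin 0 (Set.Ioi 0)) atTop := by
      simpa [sub_eq_add_neg] using
        tendsto_atTop_add_const_right (nhdsWithin 0 (Set.Ioi 0))
          (-(Real.sqrt (F η c))) hsqF
    apply tendsto_atTop_mono' _ _ hfat
    filter_upwards [Ioo_mem_nhdsGT_of_mem (Set.mem_Ico.mpr ⟨le_rfl, hc.1⟩)] with ε hε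
    have hε0 := hε.1
    have hadd := intervalIntegral.integral_add_adjacent_intervals
      (hζinv_int ε c hε0 hc.1) (hζinv_int c 1 hc.1 one_pos)
    have heq : (∫ t in ε..c, (ζ t)⁻¹) = ∫ t in ε..c, (2 * g η t)⁻¹ := by
      apply intervalIntegral.integral_congr
      intro t ht
      rw [Set.uIcc_of_le hε.2.le] at ht
      simp only
      rw [hζeqg t (lt_of_lt_of_le hε0 ht.1) ht.2]
    have hu := u_sub hmod hε0 hε.2.le hc.2
    have hnn : 0 ≤ ∫ t in c..(1:ℝ), (ζ t)⁻¹ := by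
      apply intervalIntegral.integral_nonneg hc.2.le
      intro t ht
      exact (inv_pos.mpr (hζpos t (lt_of_lt_of_le hc.1 ht.1))).le
    show Real.sqrt (F η ε) - Real.sqrt (F η c) ≤ ∫ t in ε..(1:ℝ), (ζ t)⁻¹
    linarith
  -- final ratio
  have hratio : Tendsto (fun r => η r / ζ r) (nhdsWithin 0 (Set.Ioi 0)) (nhds 0) := by
    apply squeeze_zero' (g := fun r => (2 * Real.sqrt (F η r))⁻¹)
    · filter_upwards [self_mem_nhdsWithin] with r hr
      exact div_nonneg (eta_pos hmod hr).le (hζpos r hr).le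
    · filter_upwards [Ioo_mem_nhdsGT_of_mem (Set.mem_Ico.mpr ⟨le_rfl, one_pos⟩)] with r hr
      have hg := g_pos hmod hr
      have hη := eta_pos hmod hr.1
      have hsF : 0 < Real.sqrt (F η r) := Real.sqrt_pos.mpr (F_pos hmod hr)
      have h1 : η r / ζ r ≤ η r / (2 * g η r) := by
        apply div_le_div_of_nonneg_left hη.le (by positivity) (hζge r hr.1)
      have h2 : η r / (2 * g η r) = (2 * Real.sqrt (F η r))⁻¹ := by
        have hgr : g η r = η r * Real.sqrt (F η r) := rfl
        rw [hgr]
        field_simp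
      rw [h2] at h1
      exact h1
    · have hT : Tendsto (fun r => 2 * Real.sqrt (F η r)) (nhdsWithin 0 (Set.Ioi 0)) atTop :=
        (sqrt_tendsto_atTop.comp hosg).const_mul_atTop two_pos
      exact hT.inv_tendsto_atTop
  exact ⟨ζ, rfl, hmodζ, hosgζ, hbound, hratio⟩
end
end

section
/- Let η be a modulus of continuity with lim_{r→0} η(r)/(r log(1/r)) = 0. Then for every t > 0, the flow modulus η^F(t,·) satisfies lim_{r→0} r^{-α} η^F(t,r) = 0 for every 0 < α < 1; consequently C^{η^F(t,·)} ⊂ C^{0,1^-} = ⋂_{β<1} C^{0,β}. -/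
open Set Filter MeasureTheory

noncomputable section

/-- `F` is the flow modulus of `η`. -/
def IsFlowModulusOf (η : ℝ → ℝ) (F : ℝ → ℝ → ℝ) : Prop :=
  (∀ t r : ℝ, 0 < t → 0 < r → r ≤ F t r ∧ ∫ s in r..(F t r), (η s)⁻¹ = t) ∧
    ∀ t : ℝ, F t 0 = 0

variable {η : ℝ → ℝ}

lemma IsModulus.eta0 (h : IsModulus η) : η 0 = 0 := by
  have h1 : Tendsto η (nhdsWithin 0 (Set.Ioi 0)) (nhds (η 0)) := by
    have := (h.1 0 (by simp)).tendsto
    exact this.mono_left (nhdsWithin_mono 0 Ioi_subset_Ici_self)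
  exact tendsto_nhds_unique h1 h.2.2.2.1

lemma IsModulus.integrable_inv (h : IsModulus η) {a b : ℝ} (ha : 0 < a) (hab : a ≤ b) :
    IntervalIntegrable (fun s => (η s)⁻¹) volume a b := by
  apply ContinuousOn.intervalIntegrable
  have hsub : uIcc a b ⊆ Ici (0:ℝ) := by
    rw [uIcc_of_le hab]
    intro x hx; exact le_trans ha.le hx.1
  apply ContinuousOn.inv₀ (h.1.mono hsub)
  intro x hx
  rw [uIcc_of_le hab] at hx
  exact (h.2.2.2.2 x (lt_of_lt_of_le ha hx.1)).ne'

/-- FTC for the log-flow integrand. -/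
lemma integral_inv_mul_log_inv {a b : ℝ} (ha : 0 < a) (hab : a ≤ b) (hb : b < 1) :
    ∫ s in a..b, (s * Real.log s⁻¹)⁻¹
      = Real.log (Real.log a⁻¹) - Real.log (Real.log b⁻¹) := by
  have hcont : ContinuousOn (fun s : ℝ => (s * Real.log s⁻¹)⁻¹) (uIcc a b) := by
    rw [uIcc_of_le hab]
    apply ContinuousOn.inv₀
    · apply ContinuousOn.mul continuousOn_id
      apply Real.continuousOn_log.comp (continuousOn_inv₀.mono ?_) ?_
      · intro x hx; exact (lt_of_lt_of_le ha hx.1).ne'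
      · intro x hx
        have : (0:ℝ) < x⁻¹ := inv_pos.2 (lt_of_lt_of_le ha hx.1)
        simpa using this.ne'
    · intro x hx
      have hx0 : 0 < x := lt_of_lt_of_le ha hx.1
      have hx1 : x < 1 := lt_of_le_of_lt hx.2 hb
      have : 0 < Real.log x⁻¹ := Real.log_pos (by rw [lt_inv_comm₀] <;> simp [hx0, hx1] )
      positivity
  have hderiv : ∀ x ∈ uIcc a b,
      HasDerivAt (fun s : ℝ => -Real.log (Real.log s⁻¹)) ((x * Real.log x⁻¹)⁻¹) x := by
    intro x hx
    rw [uIcc_of_le hab] at hx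
    have hx0 : 0 < x := lt_of_lt_of_le ha hx.1
    have hx1 : x < 1 := lt_of_le_of_lt hx.2 hb
    have hlx : Real.log x < 0 := Real.log_neg hx0 hx1
    have h1 : HasDerivAt (fun s : ℝ => Real.log s⁻¹) (-x⁻¹) x := by
      have : HasDerivAt (fun s : ℝ => -Real.log s) (-x⁻¹) x := (Real.hasDerivAt_log hx0.ne').neg
      refine this.congr_of_eventuallyEq ?_
      filter_upwards [eventually_ne_nhds hx0.ne'] with y hy
      rw [Real.log_inv]
    have h2 : HasDerivAt Real.log (Real.log x⁻¹)⁻¹ (Real.log x⁻¹) :=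
      Real.hasDerivAt_log (by rw [Real.log_inv]; exact (neg_pos.2 hlx).ne')
    have h3 := (h2.comp x h1).neg
    refine h3.congr_deriv ?_
    rw [Real.log_inv]
    field_simp
  rw [intervalIntegral.integral_eq_sub_of_hasDerivAt hderiv (hcont.intervalIntegrable)]
  ring

/-- sublinearity from concavity -/
lemma IsModulus.sublinear (h : IsModulus η) {R s : ℝ} (hR : 0 < R) (hs : R ≤ s) :
    η s ≤ s * η R / R := by
  have hs0 : 0 < s := lt_of_lt_of_le hR hs
  have ha : 0 ≤ R / s := by positivity
  have hb : 0 ≤ 1 - R / s := by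
    have : R / s ≤ 1 := (div_le_one hs0).2 hs
    linarith
  have := h.2.2.1.2 (mem_Ici.2 hs0.le) (mem_Ici.2 le_rfl) ha hb (by ring)
  simp only [smul_eq_mul, mul_zero, add_zero, h.eta0] at this
  have heq : R / s * s = R := by field_simp
  rw [heq] at this
  have h2 : R / s * η s ≤ η R := by linarith
  rw [div_mul_eq_mul_div, div_le_iff₀ hs0] at h2
  rw [le_div_iff₀ hR]
  nlinarith [h2]

lemma contOn_inv_mul_log {a b : ℝ} (ha : 0 < a) (hb : b < 1) :
    ContinuousOn (fun s : ℝ => (s * Real.log s⁻¹)⁻¹) (Icc a b) := by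
  apply ContinuousOn.inv₀
  · apply ContinuousOn.mul continuousOn_id
    apply Real.continuousOn_log.comp (continuousOn_inv₀.mono ?_) ?_
    · intro x hx; exact (lt_of_lt_of_le ha hx.1).ne'
    · intro x hx
      have : (0:ℝ) < x⁻¹ := inv_pos.2 (lt_of_lt_of_le ha hx.1)
      simpa using this.ne'
  · intro x hx
    have hx0 : 0 < x := lt_of_lt_of_le ha hx.1
    have hx1 : x < 1 := lt_of_le_of_lt hx.2 hb
    have : 0 < Real.log x⁻¹ := Real.log_pos ((one_lt_inv_iff₀).2 ⟨hx0, hx1⟩)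
    positivity

lemma integral_inv_eta_ge (hmod : IsModulus η) {ε a b : ℝ} (hε : 0 < ε) (ha : 0 < a)
    (hab : a ≤ b) (hb : b < 1)
    (hbound : ∀ s ∈ Icc a b, η s ≤ ε * (s * Real.log s⁻¹)) :
    ε⁻¹ * (Real.log (Real.log a⁻¹) - Real.log (Real.log b⁻¹)) ≤ ∫ s in a..b, (η s)⁻¹ := by
  have hint2 : IntervalIntegrable (fun s : ℝ => ε⁻¹ * (s * Real.log s⁻¹)⁻¹) volume a b := by
    apply ContinuousOn.intervalIntegrable
    rw [uIcc_of_le hab]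
    exact (contOn_inv_mul_log ha hb).const_smul ε⁻¹ |>.congr (fun x _ => rfl)
  have hmono : ∫ s in a..b, ε⁻¹ * (s * Real.log s⁻¹)⁻¹ ≤ ∫ s in a..b, (η s)⁻¹ := by
    apply intervalIntegral.integral_mono_on hab hint2 (hmod.integrable_inv ha hab)
    intro x hx
    have hx0 : 0 < x := lt_of_lt_of_le ha hx.1
    have hηx : 0 < η x := hmod.2.2.2.2 x hx0
    have h1 : (ε * (x * Real.log x⁻¹))⁻¹ ≤ (η x)⁻¹ := inv_anti₀ hηx (hbound x hx)
    rw [mul_inv] at h1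
    exact h1
  calc ε⁻¹ * (Real.log (Real.log a⁻¹) - Real.log (Real.log b⁻¹))
      = ∫ s in a..b, ε⁻¹ * (s * Real.log s⁻¹)⁻¹ := by
        rw [intervalIntegral.integral_const_mul, integral_inv_mul_log_inv ha hab hb]
    _ ≤ _ := hmono

lemma integral_inv_eta_mono (hmod : IsModulus η) {r R B Fv : ℝ} (hr : 0 < r)
    (h1 : r ≤ R) (h2 : R ≤ B) (h3 : B ≤ Fv) :
    ∫ s in R..B, (η s)⁻¹ ≤ ∫ s in r..Fv, (η s)⁻¹ := by
  have hR : 0 < R := lt_of_lt_of_le hr h1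
  have hB : 0 < B := lt_of_lt_of_le hR h2
  have i1 : IntervalIntegrable (fun s => (η s)⁻¹) volume r R := hmod.integrable_inv hr h1
  have i2 : IntervalIntegrable (fun s => (η s)⁻¹) volume R B := hmod.integrable_inv hR h2
  have i3 : IntervalIntegrable (fun s => (η s)⁻¹) volume B Fv := hmod.integrable_inv hB h3
  have nonneg : ∀ {x y : ℝ}, 0 < x → x ≤ y → 0 ≤ ∫ s in x..y, (η s)⁻¹ := by
    intro x y hx hxy
    apply intervalIntegral.integral_nonneg hxy
    intro u hu
    exact (inv_pos.2 (hmod.2.2.2.2 u (lt_of_lt_of_le hx hu.1))).le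
  have e1 := intervalIntegral.integral_add_adjacent_intervals i1 i2
  have e2 := intervalIntegral.integral_add_adjacent_intervals (i1.trans i2) i3
  have n1 := nonneg hr h1
  have n3 := nonneg hB h3
  linarith [e1, e2]


lemma key_estimate (hmod : IsModulus η)
    (hsmall : Tendsto (fun r => η r / (r * Real.log r⁻¹)) (nhdsWithin 0 (Set.Ioi 0)) (nhds 0))
    {F : ℝ → ℝ → ℝ} (hF : IsFlowModulusOf η F) {t : ℝ} (ht : 0 < t)
    {c : ℝ} (hc : c ∈ Set.Ioo (0:ℝ) 1) :
    ∃ δ : ℝ, 0 < δ ∧ δ ≤ 1 ∧ ∀ r : ℝ, 0 < r → r < δ → F t r ≤ r ^ c := by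
  obtain ⟨hc0, hc1⟩ := hc
  set ε : ℝ := Real.log c⁻¹ / t with hε_def
  have hlogc : 0 < Real.log c⁻¹ := Real.log_pos ((one_lt_inv_iff₀).2 ⟨hc0, hc1⟩)
  have hε : 0 < ε := div_pos hlogc ht
  obtain ⟨δ', hδ', hδ'prop⟩ := Metric.tendsto_nhdsWithin_nhds.mp hsmall ε hε
  set δ₀ : ℝ := min (δ'/2) (Real.exp (-2)) with hδ₀_def
  have hδ₀pos : 0 < δ₀ := lt_min (by linarith) (Real.exp_pos _)
  have hδ₀lt1 : δ₀ < 1 := lt_of_le_of_lt (min_le_right _ _)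
    (by rw [Real.exp_lt_one_iff]; norm_num)
  -- the pointwise bound η s ≤ ε s log s⁻¹ on (0, δ₀]
  have hbound : ∀ s : ℝ, 0 < s → s ≤ δ₀ → η s ≤ ε * (s * Real.log s⁻¹) := by
    intro s hs0 hs1
    have hs1' : s < 1 := lt_of_le_of_lt hs1 hδ₀lt1
    have hL : 0 < Real.log s⁻¹ := Real.log_pos ((one_lt_inv_iff₀).2 ⟨hs0, hs1'⟩)
    have hsδ' : dist s 0 < δ' := by
      rw [Real.dist_eq, sub_zero, abs_of_pos hs0]
      have : s ≤ δ'/2 := le_trans hs1 (min_le_left _ _)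
      linarith
    have := hδ'prop (mem_Ioi.2 hs0) hsδ'
    rw [Real.dist_eq, sub_zero] at this
    have h2 : η s / (s * Real.log s⁻¹) < ε := lt_of_le_of_lt (le_abs_self _) this
    have hpos : 0 < s * Real.log s⁻¹ := mul_pos hs0 hL
    calc η s = η s / (s * Real.log s⁻¹) * (s * Real.log s⁻¹) :=
          (div_mul_cancel₀ _ hpos.ne').symm
      _ ≤ ε * (s * Real.log s⁻¹) := by
          apply mul_le_mul_of_nonneg_right h2.le hpos.le
  have hlogδ₀ : 0 < Real.log δ₀⁻¹ :=
    Real.log_pos ((one_lt_inv_iff₀).2 ⟨hδ₀pos, hδ₀lt1⟩)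
  set K : ℝ := Real.exp (ε * t + Real.log (Real.log δ₀⁻¹)) with hK_def
  have hK : 0 < K := Real.exp_pos _
  set δ₁ : ℝ := min δ₀ (Real.exp (-(K+1))) with hδ₁_def
  have hδ₁pos : 0 < δ₁ := lt_min hδ₀pos (Real.exp_pos _)
  refine ⟨δ₁, hδ₁pos, le_of_lt (lt_of_le_of_lt (min_le_left _ _) (lt_of_lt_of_le hδ₀lt1 le_rfl)), ?_⟩
  intro r hr0 hrδ₁
  have hrδ₀ : r < δ₀ := lt_of_lt_of_le hrδ₁ (min_le_left _ _)
  have hr1 : r < 1 := lt_of_lt_of_le hrδ₀ hδ₀lt1.le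
  have hlogr : K < Real.log r⁻¹ := by
    have h1 : r < Real.exp (-(K+1)) := lt_of_lt_of_le hrδ₁ (min_le_right _ _)
    have h2 : Real.log r < -(K+1) := by
      have := Real.log_lt_log hr0 h1
      rwa [Real.log_exp] at this
    rw [Real.log_inv]; linarith
  have hloglogr : ε * t + Real.log (Real.log δ₀⁻¹) < Real.log (Real.log r⁻¹) := by
    calc ε * t + Real.log (Real.log δ₀⁻¹) = Real.log K := (Real.log_exp _).symm
      _ < Real.log (Real.log r⁻¹) := Real.log_lt_log hK hlogr
  obtain ⟨hle, hint⟩ := hF.1 t r ht hr0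
  -- Step A : F t r ≤ δ₀
  have hstepA : F t r ≤ δ₀ := by
    by_contra hcon
    push_neg at hcon
    have h1 : ε⁻¹ * (Real.log (Real.log r⁻¹) - Real.log (Real.log δ₀⁻¹))
        ≤ ∫ s in r..δ₀, (η s)⁻¹ := by
      apply integral_inv_eta_ge hmod hε hr0 hrδ₀.le hδ₀lt1
      intro s hs; exact hbound s (lt_of_lt_of_le hr0 hs.1) hs.2
    have h2 : ∫ s in r..δ₀, (η s)⁻¹ ≤ ∫ s in r..(F t r), (η s)⁻¹ :=
      integral_inv_eta_mono hmod hr0 le_rfl hrδ₀.le hcon.le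
    rw [hint] at h2
    have h3 : ε * t < Real.log (Real.log r⁻¹) - Real.log (Real.log δ₀⁻¹) := by linarith
    have h4 : t < ε⁻¹ * (Real.log (Real.log r⁻¹) - Real.log (Real.log δ₀⁻¹)) := by
      rw [inv_mul_eq_div, lt_div_iff₀ hε]; linarith
    linarith
  -- Step B : F t r ≤ r ^ c
  have hFr0 : 0 < F t r := lt_of_lt_of_le hr0 hle
  have hFr1 : F t r < 1 := lt_of_le_of_lt hstepA hδ₀lt1
  have hlogF : 0 < Real.log (F t r)⁻¹ :=
    Real.log_pos ((one_lt_inv_iff₀).2 ⟨hFr0, hFr1⟩)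
  have hkey : ε⁻¹ * (Real.log (Real.log r⁻¹) - Real.log (Real.log (F t r)⁻¹)) ≤ t := by
    calc ε⁻¹ * (Real.log (Real.log r⁻¹) - Real.log (Real.log (F t r)⁻¹))
        ≤ ∫ s in r..(F t r), (η s)⁻¹ := by
          apply integral_inv_eta_ge hmod hε hr0 hle hFr1
          intro s hs
          exact hbound s (lt_of_lt_of_le hr0 hs.1) (le_trans hs.2 hstepA)
      _ = t := hint
  have hloglogF : Real.log (Real.log r⁻¹) - ε * t ≤ Real.log (Real.log (F t r)⁻¹) := by
    rw [inv_mul_eq_div, div_le_iff₀ hε] at hkey; linarith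
  have hεt : ε * t = Real.log c⁻¹ := by
    rw [hε_def]; field_simp
  have hexp : Real.exp (-(ε*t)) = c := by
    rw [hεt, Real.log_inv, neg_neg, Real.exp_log hc0]
  have hstep : c * Real.log r⁻¹ ≤ Real.log (F t r)⁻¹ := by
    calc c * Real.log r⁻¹
        = Real.exp (-(ε*t)) * Real.exp (Real.log (Real.log r⁻¹)) := by
          rw [hexp, Real.exp_log (lt_trans hK hlogr)]
      _ = Real.exp (Real.log (Real.log r⁻¹) - ε*t) := by rw [← Real.exp_add]; ring_nf
      _ ≤ Real.exp (Real.log (Real.log (F t r)⁻¹)) := Real.exp_le_exp.2 hloglogF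
      _ = Real.log (F t r)⁻¹ := Real.exp_log hlogF
  have hfinal : Real.log (F t r) ≤ c * Real.log r := by
    rw [Real.log_inv, Real.log_inv] at hstep; linarith
  calc F t r = Real.exp (Real.log (F t r)) := (Real.exp_log hFr0).symm
    _ ≤ Real.exp (c * Real.log r) := Real.exp_le_exp.2 hfinal
    _ = r ^ c := by rw [Real.rpow_def_of_pos hr0, mul_comm]

lemma F_bounded (hmod : IsModulus η) {F : ℝ → ℝ → ℝ} (hF : IsFlowModulusOf η F)
    {t : ℝ} (ht : 0 < t) {R : ℝ} (hR : 0 < R) :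
    ∃ B : ℝ, R ≤ B ∧ ∀ r : ℝ, 0 < r → r ≤ R → F t r ≤ B := by
  have hηR : 0 < η R := hmod.2.2.2.2 R hR
  set B : ℝ := R * Real.exp ((t+1) * η R / R) with hB_def
  have hRB : R ≤ B := by
    have h1 : (1:ℝ) ≤ Real.exp ((t+1) * η R / R) := by
      rw [Real.one_le_exp_iff]; positivity
    nlinarith
  have hB0 : 0 < B := lt_of_lt_of_le hR hRB
  refine ⟨B, hRB, ?_⟩
  intro r hr0 hrR
  by_contra hcon
  push_neg at hcon
  obtain ⟨hle, hint⟩ := hF.1 t r ht hr0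
  have hint2 : IntervalIntegrable (fun s : ℝ => R / η R * s⁻¹) volume R B := by
    apply ContinuousOn.intervalIntegrable
    apply ContinuousOn.mul continuousOn_const
    apply continuousOn_inv₀.mono
    intro x hx
    rw [uIcc_of_le hRB] at hx
    exact (lt_of_lt_of_le hR hx.1).ne'
  have h1 : ∫ s in R..B, R / η R * s⁻¹ ≤ ∫ s in R..B, (η s)⁻¹ := by
    apply intervalIntegral.integral_mono_on hRB hint2 (hmod.integrable_inv hR hRB)
    intro x hx
    have hx0 : 0 < x := lt_of_lt_of_le hR hx.1
    have h2 : η x ≤ x * η R / R := hmod.sublinear hR hx.1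
    have h3 : (x * η R / R)⁻¹ ≤ (η x)⁻¹ := inv_anti₀ (hmod.2.2.2.2 x hx0) h2
    calc R / η R * x⁻¹ = (x * η R / R)⁻¹ := by
          rw [eq_comm, inv_eq_iff_eq_inv, mul_inv, inv_div]
          field_simp
      _ ≤ (η x)⁻¹ := h3
  have h2 : ∫ s in R..B, R / η R * s⁻¹ = t + 1 := by
    rw [intervalIntegral.integral_const_mul, integral_inv_of_pos hR hB0, hB_def]
    rw [mul_comm R, mul_div_assoc, div_self hR.ne', mul_one, Real.log_exp]
    field_simp
  have h3 : ∫ s in R..B, (η s)⁻¹ ≤ ∫ s in r..(F t r), (η s)⁻¹ :=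
    integral_inv_eta_mono hmod hr0 hrR hRB hcon.le
  rw [hint] at h3
  linarith

/-- **Lemma 4.3**.  If `η` is a modulus with `η(r)/(r log(1/r)) → 0` as `r → 0⁺`, then for
every `t > 0` the flow modulus `η^𝔉(t,·)` satisfies `r^{-α} η^𝔉(t,r) → 0` as `r → 0⁺` for
every `0 < α < 1`.  Consequently, every function with modulus of continuity `η^𝔉(t,·)` on
a set is (locally, i.e. at every bounded distance scale) `β`-Hölder for every `β < 1`:
`C^{η^𝔉(t,·)} ⊆ C^{0,1⁻}`. -/
theorem flow_modulus_subLogLipschitz_holder {n m : ℕ}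
    (η : ℝ → ℝ) (hmod : IsModulus η)
    (hsmall : Tendsto (fun r => η r / (r * Real.log r⁻¹)) (nhdsWithin 0 (Set.Ioi 0)) (nhds 0))
    (F : ℝ → ℝ → ℝ) (hF : IsFlowModulusOf η F)
    (t : ℝ) (ht : 0 < t) :
    (∀ α ∈ Set.Ioo (0:ℝ) 1,
      Tendsto (fun r : ℝ => r ^ (-α) * F t r) (nhdsWithin 0 (Set.Ioi 0)) (nhds 0)) ∧
    (∀ (f : EuclideanSpace ℝ (Fin n) → EuclideanSpace ℝ (Fin m))
        (s : Set (EuclideanSpace ℝ (Fin n))) (C : ℝ),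
      (∀ x ∈ s, ∀ y ∈ s, ‖f x - f y‖ ≤ C * F t ‖x - y‖) →
      ∀ β ∈ Set.Ioo (0:ℝ) 1, ∀ R > (0:ℝ), ∃ C' : ℝ, ∀ x ∈ s, ∀ y ∈ s,
        ‖x - y‖ ≤ R → ‖f x - f y‖ ≤ C' * ‖x - y‖ ^ β) := by
  constructor
  · -- Part 1
    intro α hα
    set c : ℝ := (1 + α) / 2 with hc_def
    have hc : c ∈ Set.Ioo (0:ℝ) 1 := ⟨by have := hα.1; simp only [hc_def]; linarith,
      by have := hα.2; simp only [hc_def]; linarith⟩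
    obtain ⟨δ, hδ0, hδ1, hδprop⟩ := key_estimate hmod hsmall hF ht hc
    have hca : 0 < c - α := by have := hα.2; simp only [hc_def]; linarith
    have hupper : Tendsto (fun r : ℝ => r ^ (c - α)) (nhdsWithin 0 (Set.Ioi 0)) (nhds 0) := by
      have h1 := (Real.continuousAt_rpow_const 0 (c - α) (Or.inr hca.le)).tendsto
      rw [Real.zero_rpow hca.ne'] at h1
      exact h1.mono_left nhdsWithin_le_nhds
    apply tendsto_of_tendsto_of_tendsto_of_le_of_le' tendsto_const_nhds hupper
    · filter_upwards [self_mem_nhdsWithin] with r hr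
      have hr0 : (0:ℝ) < r := hr
      have hFr : 0 < F t r := lt_of_lt_of_le hr0 (hF.1 t r ht hr0).1
      positivity
    · filter_upwards [Ioo_mem_nhdsGT_of_mem (Set.mem_Ico.2 ⟨le_rfl, hδ0⟩)] with r hr
      have hr0 : (0:ℝ) < r := hr.1
      calc r ^ (-α) * F t r ≤ r ^ (-α) * r ^ c := by
            apply mul_le_mul_of_nonneg_left (hδprop r hr0 hr.2)
            positivity
        _ = r ^ (c - α) := by rw [← Real.rpow_add hr0]; ring_nf
  · -- Part 2
    intro f s C hf β hβ R hR
    set c : ℝ := (1 + β) / 2 with hc_def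
    have hc : c ∈ Set.Ioo (0:ℝ) 1 := ⟨by have := hβ.1; simp only [hc_def]; linarith,
      by have := hβ.2; simp only [hc_def]; linarith⟩
    obtain ⟨δ, hδ0, hδ1, hδprop⟩ := key_estimate hmod hsmall hF ht hc
    obtain ⟨B, hRB, hBprop⟩ := F_bounded hmod hF ht hR
    have hB0 : 0 < B := lt_of_lt_of_le hR hRB
    have hδβ : (0:ℝ) < δ ^ β := Real.rpow_pos_of_pos hδ0 β
    set C'' : ℝ := max 1 (B / δ ^ β) with hC''_def
    have hC''1 : (1:ℝ) ≤ C'' := le_max_left _ _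
    have hC''0 : (0:ℝ) ≤ C'' := le_trans zero_le_one hC''1
    -- F t r ≤ C'' * r ^ β for all 0 < r ≤ R
    have hFbd : ∀ r : ℝ, 0 < r → r ≤ R → F t r ≤ C'' * r ^ β := by
      intro r hr0 hrR
      have hrβ : (0:ℝ) < r ^ β := Real.rpow_pos_of_pos hr0 β
      rcases lt_or_ge r δ with h | h
      · have h1 : F t r ≤ r ^ c := hδprop r hr0 h
        have h2 : r ^ c ≤ r ^ β := Real.rpow_le_rpow_of_exponent_ge hr0
          (le_trans h.le hδ1) (by have := hβ.2; simp only [hc_def]; linarith)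
        calc F t r ≤ r ^ β := le_trans h1 h2
          _ ≤ C'' * r ^ β := by nlinarith
      · have h1 : F t r ≤ B := hBprop r hr0 hrR
        have h2 : δ ^ β ≤ r ^ β := Real.rpow_le_rpow hδ0.le h hβ.1.le
        have h3 : B ≤ B / δ ^ β * r ^ β := by
          rw [div_mul_eq_mul_div, le_div_iff₀ hδβ]
          nlinarith
        calc F t r ≤ B / δ ^ β * r ^ β := le_trans h1 h3
          _ ≤ C'' * r ^ β := mul_le_mul_of_nonneg_right (le_max_right _ _) hrβ.le
    refine ⟨max C 0 * C'', ?_⟩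
    intro x hx y hy hxyR
    rcases eq_or_lt_of_le (norm_nonneg (x - y)) with h0 | h0
    · have hxy : x = y := by
        rw [← sub_eq_zero]
        exact norm_eq_zero.mp h0.symm
      rw [hxy, sub_self, norm_zero, sub_self, norm_zero, Real.zero_rpow]
      · simp
      · exact ne_of_gt hβ.1
    · have hb1 : ‖f x - f y‖ ≤ C * F t ‖x - y‖ := hf x hx y hy
      have hFpos : 0 < F t ‖x - y‖ := lt_of_lt_of_le h0 (hF.1 t _ ht h0).1
      have hb2 : C * F t ‖x - y‖ ≤ max C 0 * F t ‖x - y‖ :=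
        mul_le_mul_of_nonneg_right (le_max_left _ _) hFpos.le
      have hb3 : max C 0 * F t ‖x - y‖ ≤ max C 0 * (C'' * ‖x - y‖ ^ β) :=
        mul_le_mul_of_nonneg_left (hFbd _ h0 hxyR) (le_max_right _ _)
      calc ‖f x - f y‖ ≤ max C 0 * (C'' * ‖x - y‖ ^ β) := by linarith
        _ = max C 0 * C'' * ‖x - y‖ ^ β := by ring
end
end

section
/- Let X(x,y) = (1, y log|y|) on R^2 and let V ≤ TR^2 be the line bundle spanned by X. Suppose Φ(u,v) : Ω ⊂ R^2 → R^2 is a topological parameterization near 0 ∈ R^2 (a homeomorphism onto its image) with ∂Φ/∂u continuous and ∂Φ/∂u(u,v) spanning V at Φ(u,v) for every (u,v) ∈ Ω. Then either Φ ∉ ⋂_{β<1} C^{0,β}(Ω, R^2) or Φ^{-1} ∉ ⋂_{β<1} C^{0,β}(Φ(Ω), R^2). -/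
open Set Filter
open scoped NNReal ENNReal Topology

noncomputable section

/-- dist version of Hölder bound on a set. -/
lemma holder_dist_le {C r : ℝ≥0} {f : ℝ × ℝ → ℝ × ℝ} {s : Set (ℝ × ℝ)}
    (h : HolderOnWith C r f s) {x y : ℝ × ℝ} (hx : x ∈ s) (hy : y ∈ s) :
    dist (f x) (f y) ≤ (C : ℝ) * dist x y ^ (r : ℝ) := by
  have he := h.edist_le hx hy
  have hfin : (C : ℝ≥0∞) * edist x y ^ (r : ℝ) ≠ ⊤ := by
    apply ENNReal.mul_ne_top ENNReal.coe_ne_top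
    exact (ENNReal.rpow_lt_top_of_nonneg r.coe_nonneg (edist_ne_top x y)).ne
  have := ENNReal.toReal_mono hfin he
  rwa [ENNReal.toReal_mul, ENNReal.coe_toReal, ← ENNReal.toReal_rpow, ← dist_edist] at this

/-- Lower bound for increments from a lower bound on the derivative. -/
lemma mono_bound {c x : ℝ → ℝ} {a b m : ℝ} (hab : a ≤ b)
    (hx : ∀ u ∈ Icc a b, HasDerivAt x (c u) u)
    (hm : ∀ u ∈ Icc a b, m ≤ c u) :
    m * (b - a) ≤ x b - x a := by
  have hD : Convex ℝ (Icc a b) := convex_Icc a b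
  have hcont : ContinuousOn x (Icc a b) := fun u hu => (hx u hu).continuousAt.continuousWithinAt
  have hdiff : DifferentiableOn ℝ x (interior (Icc a b)) := fun u hu =>
    ((hx u (interior_subset hu)).differentiableAt).differentiableWithinAt
  have hder : ∀ u ∈ interior (Icc a b), m ≤ deriv x u := by
    intro u hu
    rw [(hx u (interior_subset hu)).deriv]
    exact hm u (interior_subset hu)
  have := hD.mul_sub_le_image_sub_of_le_deriv hcont hdiff hder a (left_mem_Icc.2 hab) b
    (right_mem_Icc.2 hab) hab
  linarith


/-- If `x' = c` and `w' = c ⋅ w log w` on `[a,b]` and `w a ≠ 0`, then `w` never vanishes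
on `[a,b]` and `log (w u) ⋅ exp (−x u)` is constant. -/
lemma flow_core {c x w : ℝ → ℝ} {a b : ℝ} (hab : a ≤ b)
    (hx : ∀ u ∈ Icc a b, HasDerivAt x (c u) u)
    (hw : ∀ u ∈ Icc a b, HasDerivAt w (c u * (w u * Real.log (w u))) u)
    (hwa : w a ≠ 0) :
    (∀ u ∈ Icc a b, w u ≠ 0) ∧
      Real.log (w b) * Real.exp (-(x b)) = Real.log (w a) * Real.exp (-(x a)) := by
  have wcont : ContinuousOn w (Icc a b) := fun u hu =>
    (hw u hu).continuousAt.continuousWithinAt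
  have xcont : ContinuousOn x (Icc a b) := fun u hu =>
    (hx u hu).continuousAt.continuousWithinAt
  -- the constancy argument on any subinterval where `w` does not vanish
  have key : ∀ t ∈ Icc a b, (∀ u ∈ Icc a t, w u ≠ 0) →
      Real.log (w t) * Real.exp (-(x t)) = Real.log (w a) * Real.exp (-(x a)) := by
    intro t ht hnz
    have hat : a ≤ t := ht.1
    have hsub : Icc a t ⊆ Icc a b := Icc_subset_Icc le_rfl ht.2
    have hgcont : ContinuousOn (fun v => Real.log (w v) * Real.exp (-(x v))) (Icc a t) := by
      apply ContinuousOn.mul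
      · exact ((wcont.mono hsub).log hnz)
      · exact ((xcont.mono hsub).neg).rexp
    have hgderiv : ∀ v ∈ Ico a t,
        HasDerivWithinAt (fun v => Real.log (w v) * Real.exp (-(x v))) 0 (Ici v) v := by
      intro v hv
      have hvmem : v ∈ Icc a b := hsub ⟨hv.1, hv.2.le⟩
      have hwv : w v ≠ 0 := hnz v ⟨hv.1, hv.2.le⟩
      have hL : HasDerivAt (fun v => Real.log (w v))
          ((c v * (w v * Real.log (w v))) / w v) v := (hw v hvmem).log hwv
      have hE : HasDerivAt (fun v => Real.exp (-(x v)))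
          (Real.exp (-(x v)) * -(c v)) v := ((hx v hvmem).neg).exp
      have := hL.mul hE
      have h0 : (c v * (w v * Real.log (w v))) / w v * Real.exp (-(x v)) +
          Real.log (w v) * (Real.exp (-(x v)) * -(c v)) = 0 := by
        field_simp
        ring
      rw [h0] at this
      exact this.hasDerivWithinAt
    have := constant_of_has_deriv_right_zero hgcont hgderiv t (right_mem_Icc.2 hat)
    simpa using this
  -- bound on x
  obtain ⟨B, hB⟩ := (isCompact_Icc (a := a) (b := b)).exists_bound_of_continuousOn xcont
  -- non-vanishing on all of [a,b]
  have hnz : ∀ u ∈ Icc a b, w u ≠ 0 := by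
    by_contra hcon
    push_neg at hcon
    obtain ⟨u1, hu1, hu1z⟩ := hcon
    set T : Set ℝ := Icc a b ∩ {u | w u = 0} with hT
    have hTc : IsClosed T :=
      wcont.preimage_isClosed_of_isClosed isClosed_Icc isClosed_singleton
    have hTne : T.Nonempty := ⟨u1, hu1, hu1z⟩
    have hTbdd : BddBelow T := ⟨a, fun u hu => hu.1.1⟩
    set t := sInf T with htdef
    have htT : t ∈ T := hTc.csInf_mem hTne hTbdd
    have htIcc : t ∈ Icc a b := htT.1
    have htz : w t = 0 := htT.2
    have hta : a < t := by
      rcases eq_or_lt_of_le htIcc.1 with h | h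
      · exact absurd (h ▸ htz) hwa
      · exact h
    have hIco : ∀ u ∈ Ico a t, w u ≠ 0 := by
      intro u hu hz
      exact absurd (csInf_le hTbdd ⟨⟨hu.1, hu.2.le.trans htIcc.2⟩, hz⟩) (not_le.2 hu.2)
    -- lower bound for |w| on Ico a t
    set ε := Real.exp (-(|Real.log (w a)| * Real.exp (2 * B))) with hε
    have hεpos : 0 < ε := Real.exp_pos _
    have hlow : ∀ u ∈ Ico a t, ε ≤ |w u| := by
      intro u hu
      have hu' : u ∈ Icc a b := ⟨hu.1, hu.2.le.trans htIcc.2⟩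
      have hnz' : ∀ v ∈ Icc a u, w v ≠ 0 := fun v hv =>
        hIco v ⟨hv.1, lt_of_le_of_lt hv.2 hu.2⟩
      have hkey := key u hu' hnz'
      -- log (w u) = log (w a) * exp (x u - x a)
      have hlog : Real.log (w u) = Real.log (w a) * Real.exp (x u - x a) := by
        have hexp : Real.exp (-(x u)) ≠ 0 := Real.exp_ne_zero _
        field_simp [Real.exp_sub, Real.exp_neg] at hkey ⊢
        have e1 : Real.exp (-(x u)) * Real.exp (x u) = 1 := by rw [← Real.exp_add]; simp
        rw [sub_eq_add_neg, Real.exp_add]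
        linear_combination Real.exp (x u) * hkey - Real.log (w u) * e1
      have hbnd : -( |Real.log (w a)| * Real.exp (2 * B)) ≤ Real.log (w u) := by
        rw [hlog]
        have h1 : Real.exp (x u - x a) ≤ Real.exp (2 * B) := by
          apply Real.exp_le_exp.2
          have := hB u hu'
          have := hB a (left_mem_Icc.2 hab)
          have h1 : |x u| ≤ B := hB u hu'
          have h2 : |x a| ≤ B := hB a (left_mem_Icc.2 hab)
          have := abs_le.1 h1
          have := abs_le.1 h2
          linarith
        nlinarith [abs_nonneg (Real.log (w a)), Real.exp_pos (x u - x a),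
          neg_abs_le (Real.log (w a)), abs_le.1 (le_refl |Real.log (w a)|),
          mul_le_mul_of_nonneg_left h1 (abs_nonneg (Real.log (w a)))]
      have hwu : 0 < |w u| := abs_pos.2 (hIco u hu)
      calc ε ≤ Real.exp (Real.log (w u)) := Real.exp_le_exp.2 hbnd
        _ = |w u| := by rw [← Real.log_abs]; exact Real.exp_log hwu
    -- contradiction by continuity at t
    have htcl : t ∈ closure (Ico a t) := by
      rw [closure_Ico hta.ne]
      exact ⟨hta.le, le_rfl⟩
    haveI : (𝓝[Ico a t] t).NeBot := mem_closure_iff_nhdsWithin_neBot.mp htcl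
    have htend : Tendsto (fun u => |w u|) (𝓝[Ico a t] t) (𝓝 |w t|) := by
      have : Tendsto w (𝓝[Ico a t] t) (𝓝 (w t)) :=
        (wcont t htIcc).mono_left
          (nhdsWithin_mono t (fun u hu => ⟨hu.1, hu.2.le.trans htIcc.2⟩))
      exact (continuous_abs.tendsto _).comp this
    have : ε ≤ |w t| :=
      ge_of_tendsto htend (eventually_nhdsWithin_of_forall hlow)
    rw [htz] at this
    simp at this
    linarith
  exact ⟨hnz, key b (right_mem_Icc.2 hab) (fun u hu => hnz u hu)⟩

/-- Time-reversed version of `flow_core`. -/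
lemma flow_core_rev {c x w : ℝ → ℝ} {a b : ℝ} (hab : a ≤ b)
    (hx : ∀ u ∈ Icc a b, HasDerivAt x (c u) u)
    (hw : ∀ u ∈ Icc a b, HasDerivAt w (c u * (w u * Real.log (w u))) u)
    (hwb : w b ≠ 0) :
    (∀ u ∈ Icc a b, w u ≠ 0) ∧
      Real.log (w b) * Real.exp (-(x b)) = Real.log (w a) * Real.exp (-(x a)) := by
  have hmem : ∀ s ∈ Icc a b, a + b - s ∈ Icc a b := by
    intro s hs
    exact ⟨by linarith [hs.2], by linarith [hs.1]⟩
  have hσ : ∀ s : ℝ, HasDerivAt (fun s : ℝ => a + b - s) (-1) s := by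
    intro s
    exact (hasDerivAt_id' s).const_sub (a + b)
  have hx' : ∀ s ∈ Icc a b, HasDerivAt (fun s => x (a + b - s)) (-(c (a + b - s))) s := by
    intro s hs
    have := (hx _ (hmem s hs)).comp s (hσ s)
    exact this.congr_deriv (by ring)
  have hw' : ∀ s ∈ Icc a b, HasDerivAt (fun s => w (a + b - s))
      ((-(c (a + b - s))) * (w (a + b - s) * Real.log (w (a + b - s)))) s := by
    intro s hs
    have := (hw _ (hmem s hs)).comp s (hσ s)
    refine this.congr_deriv ?_
    ring
  have hwa' : w (a + b - a) ≠ 0 := by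
    simpa using hwb
  obtain ⟨h1, h2⟩ := flow_core hab hx' hw' hwa'
  constructor
  · intro u hu
    have := h1 (a + b - u) (hmem u hu)
    simpa using this
  · have hb : a + b - b = a := by ring
    have ha : a + b - a = b := by ring
    rw [hb, ha] at h2
    exact h2.symm

lemma seg_horiz {x1 x2 y : ℝ} {z : ℝ × ℝ} (hz : z ∈ segment ℝ ((x1, y) : ℝ × ℝ) (x2, y)) :
    z.2 = y := by
  obtain ⟨s, t, hs, ht, hst, hz⟩ := hz
  have : (s • ((x1, y) : ℝ × ℝ) + t • (x2, y)).2 = s * y + t * y := rfl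
  rw [← hz, this]
  linear_combination y * hst

lemma seg_vert {x y1 y2 : ℝ} {z : ℝ × ℝ} (hz : z ∈ segment ℝ ((x, y1) : ℝ × ℝ) (x, y2)) :
    z.1 = x := by
  obtain ⟨s, t, hs, ht, hst, hz⟩ := hz
  have : (s • ((x, y1) : ℝ × ℝ) + t • (x, y2)).1 = s * x + t * x := rfl
  rw [← hz, this]
  linear_combination x * hst

/-- A continuous real-valued function on a square cannot be injective. -/
lemma not_injOn_square (f : ℝ × ℝ → ℝ) (a b δ : ℝ) (hδ : 0 < δ)
    (hf : ContinuousOn f (Icc a (a + δ) ×ˢ Icc b (b + δ))) :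
    ∃ z1 ∈ Icc a (a + δ) ×ˢ Icc b (b + δ), ∃ z2 ∈ Icc a (a + δ) ×ˢ Icc b (b + δ),
      z1 ≠ z2 ∧ f z1 = f z2 := by
  set S : Set (ℝ × ℝ) := Icc a (a + δ) ×ˢ Icc b (b + δ) with hS
  set P : ℝ × ℝ := (a, b)
  set Q : ℝ × ℝ := (a + δ, b + δ)
  set R1 : ℝ × ℝ := (a + δ, b)
  set R2 : ℝ × ℝ := (a, b + δ)
  have hPS : P ∈ S := by constructor <;> constructor <;> simp [P] <;> linarith
  have hQS : Q ∈ S := by constructor <;> constructor <;> simp [Q] <;> linarith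
  have hR1S : R1 ∈ S := by constructor <;> constructor <;> simp [R1] <;> linarith
  have hR2S : R2 ∈ S := by constructor <;> constructor <;> simp [R2] <;> linarith
  have hconv : Convex ℝ S := (convex_Icc _ _).prod (convex_Icc _ _)
  by_cases hfPQ : f P = f Q
  · refine ⟨P, hPS, Q, hQS, ?_, hfPQ⟩
    intro h
    have : a = a + δ := congrArg Prod.fst h
    linarith
  set path1 : Set (ℝ × ℝ) := segment ℝ P R1 ∪ segment ℝ R1 Q with hpath1
  set path2 : Set (ℝ × ℝ) := segment ℝ P R2 ∪ segment ℝ R2 Q with hpath2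
  have hp1S : path1 ⊆ S :=
    union_subset (hconv.segment_subset hPS hR1S) (hconv.segment_subset hR1S hQS)
  have hp2S : path2 ⊆ S :=
    union_subset (hconv.segment_subset hPS hR2S) (hconv.segment_subset hR2S hQS)
  have hp1conn : IsPreconnected path1 :=
    IsPreconnected.union R1 (right_mem_segment _ _ _) (left_mem_segment _ _ _)
      (convex_segment _ _).isPreconnected (convex_segment _ _).isPreconnected
  have hp2conn : IsPreconnected path2 :=
    IsPreconnected.union R2 (right_mem_segment _ _ _) (left_mem_segment _ _ _)
      (convex_segment _ _).isPreconnected (convex_segment _ _).isPreconnected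
  have hPp1 : P ∈ path1 := Or.inl (left_mem_segment _ _ _)
  have hQp1 : Q ∈ path1 := Or.inr (right_mem_segment _ _ _)
  have hPp2 : P ∈ path2 := Or.inl (left_mem_segment _ _ _)
  have hQp2 : Q ∈ path2 := Or.inr (right_mem_segment _ _ _)
  set mid := (f P + f Q) / 2 with hmid
  have hmidP : mid ≠ f P := fun h => hfPQ (by rw [hmid] at h; linarith [h])
  have hmidQ : mid ≠ f Q := fun h => hfPQ (by rw [hmid] at h; linarith [h])
  have hexists : ∀ (path : Set (ℝ × ℝ)), IsPreconnected path → P ∈ path → Q ∈ path →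
      path ⊆ S → ∃ z ∈ path, f z = mid := by
    intro path hconn hP hQ hsub
    rcases le_total (f P) (f Q) with h | h
    · have := hconn.intermediate_value hP hQ (hf.mono hsub)
      have hmem : mid ∈ Icc (f P) (f Q) := ⟨by rw [hmid]; linarith, by rw [hmid]; linarith⟩
      obtain ⟨z, hz, hfz⟩ := this hmem
      exact ⟨z, hz, hfz⟩
    · have := hconn.intermediate_value hQ hP (hf.mono hsub)
      have hmem : mid ∈ Icc (f Q) (f P) := ⟨by rw [hmid]; linarith, by rw [hmid]; linarith⟩
      obtain ⟨z, hz, hfz⟩ := this hmem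
      exact ⟨z, hz, hfz⟩
  obtain ⟨z1, hz1, hfz1⟩ := hexists path1 hp1conn hPp1 hQp1 hp1S
  obtain ⟨z2, hz2, hfz2⟩ := hexists path2 hp2conn hPp2 hQp2 hp2S
  refine ⟨z1, hp1S hz1, z2, hp2S hz2, ?_, by rw [hfz1, hfz2]⟩
  intro heq
  subst heq
  -- z1 ∈ path1 ∩ path2 ⟹ z1 = P or z1 = Q
  have hz1PQ : z1 = P ∨ z1 = Q := by
    rcases hz1 with h1 | h1 <;> rcases hz2 with h2 | h2
    · left
      have hy : z1.2 = b := seg_horiz h1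
      have hx : z1.1 = a := seg_vert h2
      exact Prod.ext hx hy
    · exfalso
      have hy : z1.2 = b := seg_horiz h1
      have hy' : z1.2 = b + δ := seg_horiz h2
      linarith [hy ▸ hy']
    · exfalso
      have hx : z1.1 = a + δ := seg_vert h1
      have hx' : z1.1 = a := seg_vert h2
      linarith [hx ▸ hx']
    · right
      have hx : z1.1 = a + δ := seg_vert h1
      have hy : z1.2 = b + δ := seg_horiz h2
      exact Prod.ext hx hy
  rcases hz1PQ with h | h
  · exact hmidP (by rw [← h, hfz1])
  · exact hmidQ (by rw [← h, hfz1])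

set_option maxHeartbeats 1600000 in
/-- **Proposition 4.7 (sharpness of the `C^{0,1−ε}` regularity)**.  Let
`X(x,y) = (1, y log|y|)` on `ℝ²` and let `𝒱` be the line bundle spanned by `X`.  Suppose
`Φ : Ω ⊆ ℝ² → ℝ²` is a topological parameterization near `0 ∈ ℝ²` (a homeomorphism onto
its image, whose image contains `0`) such that the partial derivative `∂Φ/∂u` exists, is
continuous, and spans `𝒱_{Φ(u,v)}` at every point of `Ω`.  Then `Φ` and `Φ⁻¹` cannot both
be `C^{0,β}` for every `β < 1`. -/
theorem logLipschitz_frobenius_sharp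
    (Ω : Set (ℝ × ℝ)) (hΩ : IsOpen Ω) (hne : Ω.Nonempty)
    (Φ : ℝ × ℝ → ℝ × ℝ) (hΦc : ContinuousOn Φ Ω) (hΦinj : Set.InjOn Φ Ω)
    (Ψ : ℝ × ℝ → ℝ × ℝ) (hΨc : ContinuousOn Ψ (Φ '' Ω))
    (hΨΦ : ∀ p ∈ Ω, Ψ (Φ p) = p)
    (h0 : (0, 0) ∈ Φ '' Ω)
    (Pu : ℝ × ℝ → ℝ × ℝ)
    (hPu : ∀ p ∈ Ω, HasDerivAt (fun u : ℝ => Φ (u, p.2)) (Pu p) p.1)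
    (hPuc : ContinuousOn Pu Ω)
    (hspan : ∀ p ∈ Ω, ∃ c : ℝ, c ≠ 0 ∧
      Pu p = c • ((1 : ℝ), (Φ p).2 * Real.log |(Φ p).2|)) :
    ¬((∀ β ∈ Set.Ioo (0:ℝ) 1, ∃ C : NNReal, HolderOnWith C (Real.toNNReal β) Φ Ω) ∧
      (∀ β ∈ Set.Ioo (0:ℝ) 1, ∃ C : NNReal, HolderOnWith C (Real.toNNReal β) Ψ (Φ '' Ω))) := by
  rintro ⟨hHolΦ, hHolΨ⟩
  obtain ⟨⟨u0, v0⟩, hp0Ω, hΦp0⟩ := h0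
  obtain ⟨c, hcdef⟩ : ∃ c : ℝ × ℝ → ℝ, c = fun p => (Pu p).1 := ⟨_, rfl⟩
  -- description of Pu in terms of c
  have hPu' : ∀ p ∈ Ω, Pu p = (c p, c p * ((Φ p).2 * Real.log ((Φ p).2))) := by
    intro p hp
    obtain ⟨cp, hcp0, hcp⟩ := hspan p hp
    have h1 : c p = cp := by
      simp only [hcdef, hcp, Prod.smul_fst, smul_eq_mul, mul_one]
    rw [hcp, h1]
    refine Prod.ext ?_ ?_
    · simp
    · simp [Real.log_abs]
  have hcne : ∀ p ∈ Ω, c p ≠ 0 := by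
    intro p hp
    obtain ⟨cp, hcp0, hcp⟩ := hspan p hp
    have h1 : c p = cp := by
      simp only [hcdef, hcp, Prod.smul_fst, smul_eq_mul, mul_one]
    rw [h1]; exact hcp0
  -- componentwise derivatives
  have hxw : ∀ p ∈ Ω, HasDerivAt (fun t => (Φ (t, p.2)).1) (c p) p.1 ∧
      HasDerivAt (fun t => (Φ (t, p.2)).2)
        (c p * ((Φ p).2 * Real.log ((Φ p).2))) p.1 := by
    intro p hp
    have h := hPu p hp
    rw [hPu' p hp] at h
    exact ⟨(hasFDerivAt_fst.comp_hasDerivAt p.1 h).congr_deriv (by simp),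
      (hasFDerivAt_snd.comp_hasDerivAt p.1 h).congr_deriv (by simp)⟩
  have hlined : ∀ v u : ℝ, ((u, v) : ℝ × ℝ) ∈ Ω →
      HasDerivAt (fun t => (Φ (t, v)).1) (c (u, v)) u ∧
      HasDerivAt (fun t => (Φ (t, v)).2)
        (c (u, v) * ((Φ (u, v)).2 * Real.log ((Φ (u, v)).2))) u :=
    fun v u hu => hxw (u, v) hu
  -- choice of the radius r
  have hc0 : c (u0, v0) ≠ 0 := hcne _ hp0Ω
  obtain ⟨m, hmdef⟩ : ∃ m : ℝ, m = |c (u0, v0)| / 2 := ⟨_, rfl⟩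
  have hmpos : 0 < m := by
    have := abs_pos.2 hc0
    rw [hmdef]; linarith
  have hcat : ContinuousAt c (u0, v0) := by
    rw [hcdef]
    exact continuous_fst.continuousAt.comp (hPuc.continuousAt (hΩ.mem_nhds hp0Ω))
  obtain ⟨r0, hr0, hballc⟩ := Metric.continuousAt_iff.mp hcat m hmpos
  obtain ⟨r1, hr1, hball1⟩ := Metric.isOpen_iff.mp hΩ _ hp0Ω
  obtain ⟨r, hrdef⟩ : ∃ r : ℝ, r = min r0 r1 / 2 := ⟨_, rfl⟩
  have hrpos : 0 < r := by
    rw [hrdef]; have := lt_min hr0 hr1; positivity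
  have hrr0 : r < r0 := by
    rw [hrdef]
    have h1 : min r0 r1 ≤ r0 := min_le_left _ _
    linarith
  have hrr1 : r < r1 := by
    rw [hrdef]
    have h1 : min r0 r1 ≤ r1 := min_le_right _ _
    linarith
  set K : Set (ℝ × ℝ) := Metric.closedBall ((u0, v0) : ℝ × ℝ) r with hKdef
  have hKsub : K ⊆ Ω := fun p hp =>
    hball1 (Metric.mem_ball.2 (lt_of_le_of_lt (Metric.mem_closedBall.1 hp) hrr1))
  have hKc : ∀ p ∈ K, |c p - c (u0, v0)| < m := by
    intro p hp
    have h1 : dist p ((u0, v0) : ℝ × ℝ) < r0 :=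
      lt_of_le_of_lt (Metric.mem_closedBall.1 hp) hrr0
    have := hballc h1
    rwa [Real.dist_eq] at this
  have hsign : (∀ p ∈ K, m ≤ c p ∧ c p ≤ 3 * m) ∨
      (∀ p ∈ K, c p ≤ -m ∧ -(3 * m) ≤ c p) := by
    rcases lt_or_gt_of_ne hc0 with hneg | hpos
    · right
      intro p hp
      have h1 := abs_lt.1 (hKc p hp)
      have h2 : c (u0, v0) = -(2 * m) := by
        rw [hmdef, abs_of_neg hneg]; ring
      rw [h2] at h1
      constructor <;> linarith [h1.1, h1.2]
    · left
      intro p hp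
      have h1 := abs_lt.1 (hKc p hp)
      have h2 : c (u0, v0) = 2 * m := by
        rw [hmdef, abs_of_pos hpos]; ring
      rw [h2] at h1
      constructor <;> linarith [h1.1, h1.2]
  have hKmem : ∀ u v : ℝ, |u - u0| ≤ r → |v - v0| ≤ r → ((u, v) : ℝ × ℝ) ∈ K := by
    intro u v h1 h2
    rw [hKdef, Metric.mem_closedBall, Prod.dist_eq, Real.dist_eq, Real.dist_eq]
    exact max_le h1 h2
  obtain ⟨ρ, hρdef⟩ : ∃ ρ : ℝ, ρ = r / 6 := ⟨_, rfl⟩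
  have hρpos : 0 < ρ := by rw [hρdef]; positivity
  obtain ⟨d, hddef⟩ : ∃ d : ℝ, d = m * ρ := ⟨_, rfl⟩
  have hdpos : 0 < d := by rw [hddef]; positivity
  -- the u0-line maps onto the segment {y = 0}
  have hw0 : ∀ u ∈ Icc (u0 - r) (u0 + r), (Φ (u, v0)).2 = 0 := by
    by_contra hcon
    push_neg at hcon
    obtain ⟨u1, hu1, hu1ne⟩ := hcon
    have hmemline : ∀ u ∈ Icc (u0 - r) (u0 + r), ((u, v0) : ℝ × ℝ) ∈ Ω := by
      intro u hu
      exact hKsub (hKmem u v0 (abs_le.2 ⟨by linarith [hu.1], by linarith [hu.2]⟩)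
        (by simp [hrpos.le]))
    have hΦ0 : (Φ (u0, v0)).2 = 0 := by rw [hΦp0]
    have hu1ne0 : u1 ≠ u0 := fun h => hu1ne (h ▸ hΦ0)
    rcases lt_or_gt_of_ne hu1ne0 with h | h
    · have hsub : Icc u1 u0 ⊆ Icc (u0 - r) (u0 + r) :=
        Icc_subset_Icc hu1.1 (by linarith [hrpos])
      have hflow := flow_core (c := fun u => c (u, v0)) (x := fun u => (Φ (u, v0)).1)
        (w := fun u => (Φ (u, v0)).2) h.le
        (fun u hu => (hlined v0 u (hmemline u (hsub hu))).1)
        (fun u hu => (hlined v0 u (hmemline u (hsub hu))).2) hu1ne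
      exact (hflow.1 u0 (right_mem_Icc.2 h.le)) hΦ0
    · have hsub : Icc u0 u1 ⊆ Icc (u0 - r) (u0 + r) :=
        Icc_subset_Icc (by linarith [hrpos]) hu1.2
      have hflow := flow_core_rev (c := fun u => c (u, v0)) (x := fun u => (Φ (u, v0)).1)
        (w := fun u => (Φ (u, v0)).2) h.le
        (fun u hu => (hlined v0 u (hmemline u (hsub hu))).1)
        (fun u hu => (hlined v0 u (hmemline u (hsub hu))).2) hu1ne
      exact (hflow.1 u0 (left_mem_Icc.2 h.le)) hΦ0
  have hmemline : ∀ u ∈ Icc (u0 - r) (u0 + r), ((u, v0) : ℝ × ℝ) ∈ K := by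
    intro u hu
    exact hKmem u v0 (abs_le.2 ⟨by linarith [hu.1], by linarith [hu.2]⟩)
      (by simp [hrpos.le])
  -- surjectivity of the first coordinate on the u0-line
  have hx00 : (Φ (u0, v0)).1 = 0 := by rw [hΦp0]
  have hx0cont : ContinuousOn (fun u => (Φ (u, v0)).1) (Icc (u0 - r) (u0 + r)) :=
    fun u hu => ((hlined v0 u (hKsub (hmemline u hu))).1).continuousAt.continuousWithinAt
  have hsurj : ∀ ξ : ℝ, |ξ| ≤ m * r → ∃ u ∈ Icc (u0 - r) (u0 + r), Φ (u, v0) = (ξ, 0) := by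
    intro ξ hξ
    have hIccsub1 : Icc u0 (u0 + r) ⊆ Icc (u0 - r) (u0 + r) :=
      Icc_subset_Icc (by linarith) le_rfl
    have hIccsub2 : Icc (u0 - r) u0 ⊆ Icc (u0 - r) (u0 + r) :=
      Icc_subset_Icc le_rfl (by linarith)
    have habs := abs_le.1 hξ
    rcases hsign with hpos | hneg
    · have h1 : m * (u0 + r - u0) ≤ (Φ (u0 + r, v0)).1 - (Φ (u0, v0)).1 :=
        mono_bound (by linarith)
          (fun u hu => (hlined v0 u (hKsub (hmemline u (hIccsub1 hu)))).1)
          (fun u hu => (hpos _ (hmemline u (hIccsub1 hu))).1)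
      have h2 : m * (u0 - (u0 - r)) ≤ (Φ (u0, v0)).1 - (Φ (u0 - r, v0)).1 :=
        mono_bound (by linarith)
          (fun u hu => (hlined v0 u (hKsub (hmemline u (hIccsub2 hu)))).1)
          (fun u hu => (hpos _ (hmemline u (hIccsub2 hu))).1)
      have hmem : ξ ∈ Icc ((Φ (u0 - r, v0)).1) ((Φ (u0 + r, v0)).1) := by
        ring_nf at h1 h2
        constructor <;> nlinarith [hx00, habs.1, habs.2, h1, h2]
      obtain ⟨u, hu, hxu⟩ := intermediate_value_Icc (by linarith : u0 - r ≤ u0 + r)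
        hx0cont hmem
      exact ⟨u, hu, Prod.ext hxu (hw0 u hu)⟩
    · have h1 : m * (u0 + r - u0) ≤ -((Φ (u0 + r, v0)).1) - -((Φ (u0, v0)).1) :=
        mono_bound (by linarith)
          (fun u hu => ((hlined v0 u (hKsub (hmemline u (hIccsub1 hu)))).1).neg)
          (fun u hu => by linarith [(hneg _ (hmemline u (hIccsub1 hu))).1])
      have h2 : m * (u0 - (u0 - r)) ≤ -((Φ (u0, v0)).1) - -((Φ (u0 - r, v0)).1) :=
        mono_bound (by linarith)
          (fun u hu => ((hlined v0 u (hKsub (hmemline u (hIccsub2 hu)))).1).neg)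
          (fun u hu => by linarith [(hneg _ (hmemline u (hIccsub2 hu))).1])
      have hmem : ξ ∈ Icc ((Φ (u0 + r, v0)).1) ((Φ (u0 - r, v0)).1) := by
        ring_nf at h1 h2
        constructor <;> nlinarith [hx00, habs.1, habs.2, h1, h2]
      obtain ⟨u, hu, hxu⟩ := intermediate_value_Icc' (by linarith : u0 - r ≤ u0 + r)
        hx0cont hmem
      exact ⟨u, hu, Prod.ext hxu (hw0 u hu)⟩
  -- choice of β and the Hölder constants
  obtain ⟨β, hβdef⟩ : ∃ β : ℝ, β = (1 + Real.exp (-(d / 2))) / 2 := ⟨_, rfl⟩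
  have hexpd2 : Real.exp (-(d / 2)) < 1 := Real.exp_lt_one_iff.2 (by linarith)
  have hβ0 : 0 < β := by
    have := Real.exp_pos (-(d / 2)); rw [hβdef]; linarith
  have hβ1 : β < 1 := by rw [hβdef]; linarith
  have hγpos : 0 < β ^ 2 - Real.exp (-d) := by
    have h1 : Real.exp (-d) = Real.exp (-(d / 2)) ^ 2 := by
      rw [sq, ← Real.exp_add]; ring_nf
    have h2 : Real.exp (-(d / 2)) < β := by rw [hβdef]; linarith
    have h3 := Real.exp_pos (-(d / 2))
    have h4 : Real.exp (-(d / 2)) ^ 2 < β ^ 2 := by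
      apply pow_lt_pow_left₀ h2 h3.le
      norm_num
    linarith
  obtain ⟨γ, hγdef⟩ : ∃ γ : ℝ, γ = β ^ 2 - Real.exp (-d) := ⟨_, rfl⟩
  have hγpos' : 0 < γ := hγdef ▸ hγpos
  obtain ⟨C, hC⟩ := hHolΦ β ⟨hβ0, hβ1⟩
  obtain ⟨C', hC'⟩ := hHolΨ β ⟨hβ0, hβ1⟩
  have hβnn : ((Real.toNNReal β : NNReal) : ℝ) = β := Real.coe_toNNReal _ hβ0.le
  obtain ⟨A, hAdef⟩ : ∃ A : ℝ, A = Real.log ((C : ℝ) + 1) := ⟨_, rfl⟩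
  obtain ⟨A', hA'def⟩ : ∃ A' : ℝ, A' = Real.log ((C' : ℝ) + 1) := ⟨_, rfl⟩
  obtain ⟨εst, hεstdef⟩ : ∃ e : ℝ, e = Real.exp (-((A + β * A') / γ)) := ⟨_, rfl⟩
  have hεstpos : 0 < εst := hεstdef ▸ Real.exp_pos _
  obtain ⟨δ1, hδ1def⟩ : ∃ δ1 : ℝ, δ1 = min (1 / 2) (min (εst / 2) (m * r / 4)) := ⟨_, rfl⟩
  have hδ1pos : 0 < δ1 := by
    rw [hδ1def]
    exact lt_min (by norm_num) (lt_min (by positivity) (by positivity))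
  -- continuity of Ψ at the origin
  have h0' : ((0 : ℝ), (0 : ℝ)) ∈ Φ '' Ω := ⟨(u0, v0), hp0Ω, hΦp0⟩
  have hΨ0 : Ψ ((0 : ℝ), (0 : ℝ)) = (u0, v0) := by rw [← hΦp0, hΨΦ _ hp0Ω]
  obtain ⟨δ2, hδ2, hΨball⟩ := Metric.continuousWithinAt_iff.mp (hΨc _ h0') (r / 2)
    (by positivity)
  obtain ⟨δf, hδfdef⟩ : ∃ δf : ℝ, δf = min δ1 δ2 := ⟨_, rfl⟩
  have hδfpos : 0 < δf := hδfdef ▸ lt_min hδ1pos hδ2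
  have hδfδ1 : δf ≤ δ1 := hδfdef ▸ min_le_left _ _
  have hδfδ2 : δf ≤ δ2 := hδfdef ▸ min_le_right _ _
  have hδ1half : δ1 ≤ 1 / 2 := hδ1def ▸ min_le_left _ _
  have hδ1εst : δ1 ≤ εst / 2 := hδ1def ▸ le_trans (min_le_right _ _) (min_le_left _ _)
  have hδ1mr : δ1 ≤ m * r / 4 := hδ1def ▸ le_trans (min_le_right _ _) (min_le_right _ _)
  -- find a point q near p0 with (Φ q).2 ≠ 0
  set U : Set (ℝ × ℝ) := Ω ∩ Φ ⁻¹' (Metric.ball ((0 : ℝ), (0 : ℝ)) δf) with hUdef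
  have hUopen : IsOpen U := hΦc.isOpen_inter_preimage hΩ Metric.isOpen_ball
  have hp0U : ((u0, v0) : ℝ × ℝ) ∈ U := by
    refine ⟨hp0Ω, ?_⟩
    simp only [Set.mem_preimage, hΦp0, Metric.mem_ball, dist_self]
    exact hδfpos
  have hqex : ∃ q ∈ U, (Φ q).2 ≠ 0 := by
    by_contra hcon
    push_neg at hcon
    obtain ⟨δs, hδs, hballU⟩ := Metric.isOpen_iff.mp hUopen _ hp0U
    have hsq : Icc u0 (u0 + δs / 2) ×ˢ Icc v0 (v0 + δs / 2) ⊆ U := by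
      rintro ⟨u, v⟩ ⟨hu, hv⟩
      simp only [mem_Icc] at hu hv
      apply hballU
      rw [Metric.mem_ball, Prod.dist_eq, Real.dist_eq, Real.dist_eq]
      apply max_lt <;> rw [abs_lt] <;> constructor <;> linarith [hu.1, hu.2, hv.1, hv.2]
    obtain ⟨z1, hz1, z2, hz2, hne', heq⟩ := not_injOn_square (fun p => (Φ p).1)
      u0 v0 (δs / 2) (by positivity)
      (continuous_fst.comp_continuousOn (hΦc.mono (hsq.trans inter_subset_left)))
    exact hne' (hΦinj (hsq hz1).1 (hsq hz2).1
      (Prod.ext heq (by rw [hcon z1 (hsq hz1), hcon z2 (hsq hz2)])))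
  obtain ⟨⟨u', v'⟩, ⟨hqΩ, hqball⟩, hq2⟩ := hqex
  have hqdist : dist (Φ (u', v')) (((0 : ℝ), (0 : ℝ)) : ℝ × ℝ) < δf := by
    simpa [Metric.mem_ball] using hqball
  obtain ⟨x', hx'def⟩ : ∃ x : ℝ, x = (Φ (u', v')).1 := ⟨_, rfl⟩
  obtain ⟨w', hw'def⟩ : ∃ w : ℝ, w = (Φ (u', v')).2 := ⟨_, rfl⟩
  have hx'w' : |x'| < δf ∧ |w'| < δf := by
    rw [hx'def, hw'def]
    rw [Prod.dist_eq] at hqdist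
    constructor
    · exact lt_of_le_of_lt (le_max_left _ _) (by simpa [Real.dist_eq] using hqdist)
    · exact lt_of_le_of_lt (le_max_right _ _) (by simpa [Real.dist_eq] using hqdist)
  -- q is close to p0
  have hqnear : dist (((u', v') : ℝ × ℝ)) (((u0, v0) : ℝ × ℝ)) < r / 2 := by
    have h1 : Φ (u', v') ∈ Φ '' Ω := mem_image_of_mem _ hqΩ
    have h2 := hΨball h1 (lt_of_lt_of_le hqdist hδfδ2)
    rwa [hΨΦ _ hqΩ, hΨ0] at h2
  have hu'near : |u' - u0| < r / 2 := by
    rw [Prod.dist_eq, Real.dist_eq, Real.dist_eq] at hqnear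
    exact lt_of_le_of_lt (le_max_left _ _) hqnear
  have hv'near : |v' - v0| < r / 2 := by
    rw [Prod.dist_eq, Real.dist_eq, Real.dist_eq] at hqnear
    exact lt_of_le_of_lt (le_max_right _ _) hqnear
  have hu'r : |u' - u0| ≤ r := by linarith [hu'near]
  have hu'Icc : u' ∈ Icc (u0 - r) (u0 + r) := by
    have := abs_le.1 hu'r
    exact ⟨by linarith [this.1], by linarith [this.2]⟩
  have hv'ne : v' ≠ v0 := by
    intro h
    apply hq2
    rw [h]
    exact hw0 u' hu'Icc
  obtain ⟨s, hsdef⟩ : ∃ s : ℝ, s = |v' - v0| := ⟨_, rfl⟩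
  have hspos : 0 < s := by
    rw [hsdef]; exact abs_pos.2 (sub_ne_zero.2 hv'ne)
  -- segment membership for the flow
  have hsegK : ∀ u : ℝ, |u - u'| ≤ ρ → ((u, v') : ℝ × ℝ) ∈ K := by
    intro u hu
    apply hKmem
    · have h2 : |u - u0| ≤ |u - u'| + |u' - u0| := by
        calc |u - u0| = |(u - u') + (u' - u0)| := by ring_nf
          _ ≤ |u - u'| + |u' - u0| := abs_add_le _ _
      have h3 : ρ ≤ r / 2 := by rw [hρdef]; linarith
      linarith
    · linarith [hv'near]
  -- the second point u'' obtained by following the flow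
  obtain ⟨u'', hu''Ω, hΔl, hΔu, hy''ne, hgeq⟩ :
      ∃ u'' : ℝ, ((u'', v') : ℝ × ℝ) ∈ Ω ∧
        d ≤ (Φ (u'', v')).1 - x' ∧ (Φ (u'', v')).1 - x' ≤ 3 * m * ρ ∧
        (Φ (u'', v')).2 ≠ 0 ∧
        Real.log ((Φ (u'', v')).2) * Real.exp (-((Φ (u'', v')).1)) =
          Real.log w' * Real.exp (-x') := by
    rcases hsign with hpos | hneg
    · have hseg : ∀ u ∈ Icc u' (u' + ρ), ((u, v') : ℝ × ℝ) ∈ K := fun u hu =>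
        hsegK u (abs_le.2 ⟨by linarith [hu.1], by linarith [hu.2]⟩)
      have hxd : ∀ u ∈ Icc u' (u' + ρ),
          HasDerivAt (fun t => (Φ (t, v')).1) (c (u, v')) u := fun u hu =>
        (hlined v' u (hKsub (hseg u hu))).1
      have hwd : ∀ u ∈ Icc u' (u' + ρ),
          HasDerivAt (fun t => (Φ (t, v')).2)
            (c (u, v') * ((Φ (u, v')).2 * Real.log ((Φ (u, v')).2))) u := fun u hu =>
        (hlined v' u (hKsub (hseg u hu))).2
      have hflow := flow_core (by linarith : u' ≤ u' + ρ) hxd hwd hq2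
      have hlow' : m * ρ ≤ (Φ (u' + ρ, v')).1 - (Φ (u', v')).1 := by
        have := mono_bound (by linarith : u' ≤ u' + ρ) hxd
          (fun u hu => (hpos _ (hseg u hu)).1)
        ring_nf at this ⊢
        linarith [this]
      have hupp' : (Φ (u' + ρ, v')).1 - (Φ (u', v')).1 ≤ 3 * m * ρ := by
        have := mono_bound (c := fun u => -(c (u, v')))
          (x := fun u => -((Φ (u, v')).1)) (m := -(3 * m))
          (by linarith : u' ≤ u' + ρ)
          (fun u hu => (hxd u hu).neg)
          (fun u hu => by
            show -(3 * m) ≤ -(c (u, v'))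
            linarith [(hpos _ (hseg u hu)).2])
        ring_nf at this ⊢
        linarith [this]
      refine ⟨u' + ρ, hKsub (hseg (u' + ρ) (right_mem_Icc.2 (by linarith))),
        ?_, ?_, hflow.1 (u' + ρ) (right_mem_Icc.2 (by linarith)), ?_⟩
      · rw [hx'def, hddef]; linarith
      · rw [hx'def]; linarith
      · rw [hx'def, hw'def]; exact hflow.2
    · have hseg : ∀ u ∈ Icc (u' - ρ) u', ((u, v') : ℝ × ℝ) ∈ K := fun u hu =>
        hsegK u (abs_le.2 ⟨by linarith [hu.1], by linarith [hu.2]⟩)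
      have hxd : ∀ u ∈ Icc (u' - ρ) u',
          HasDerivAt (fun t => (Φ (t, v')).1) (c (u, v')) u := fun u hu =>
        (hlined v' u (hKsub (hseg u hu))).1
      have hwd : ∀ u ∈ Icc (u' - ρ) u',
          HasDerivAt (fun t => (Φ (t, v')).2)
            (c (u, v') * ((Φ (u, v')).2 * Real.log ((Φ (u, v')).2))) u := fun u hu =>
        (hlined v' u (hKsub (hseg u hu))).2
      have hflow := flow_core_rev (by linarith : u' - ρ ≤ u') hxd hwd hq2
      have hlow' : m * ρ ≤ (Φ (u' - ρ, v')).1 - (Φ (u', v')).1 := by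
        have := mono_bound (c := fun u => -(c (u, v')))
          (x := fun u => -((Φ (u, v')).1)) (m := m)
          (by linarith : u' - ρ ≤ u')
          (fun u hu => (hxd u hu).neg)
          (fun u hu => by
            show m ≤ -(c (u, v'))
            linarith [(hneg _ (hseg u hu)).1])
        ring_nf at this ⊢
        linarith [this]
      have hupp' : (Φ (u' - ρ, v')).1 - (Φ (u', v')).1 ≤ 3 * m * ρ := by
        have := mono_bound (by linarith : u' - ρ ≤ u') hxd
          (fun u hu => by linarith [(hneg _ (hseg u hu)).2] :
            ∀ u ∈ Icc (u' - ρ) u', -(3 * m) ≤ c (u, v'))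
        ring_nf at this ⊢
        linarith [this]
      refine ⟨u' - ρ, hKsub (hseg (u' - ρ) (left_mem_Icc.2 (by linarith))),
        ?_, ?_, hflow.1 (u' - ρ) (left_mem_Icc.2 (by linarith)), ?_⟩
      · rw [hx'def, hddef]; linarith
      · rw [hx'def]; linarith
      · rw [hx'def, hw'def]; exact hflow.2.symm
  obtain ⟨x'', hx''def⟩ : ∃ x : ℝ, x = (Φ (u'', v')).1 := ⟨_, rfl⟩
  obtain ⟨y'', hy''def⟩ : ∃ y : ℝ, y = (Φ (u'', v')).2 := ⟨_, rfl⟩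
  obtain ⟨Δx, hΔxdef⟩ : ∃ D : ℝ, D = x'' - x' := ⟨_, rfl⟩
  have hy''ne' : y'' ≠ 0 := by rw [hy''def]; exact hy''ne
  have hΔl' : d ≤ Δx := by rw [hΔxdef, hx''def]; exact hΔl
  have hΔu' : Δx ≤ 3 * m * ρ := by rw [hΔxdef, hx''def]; exact hΔu
  have hgeq' : Real.log y'' * Real.exp (-x'') = Real.log w' * Real.exp (-x') := by
    rw [hy''def, hx''def]; exact hgeq
  -- basic log facts
  have hw'pos : 0 < |w'| := by rw [hw'def]; exact abs_pos.2 hq2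
  have hw'ne : w' ≠ 0 := by rw [hw'def]; exact hq2
  have hw'lt1 : |w'| < 1 := by
    have := hx'w'.2; linarith [hδfδ1, hδ1half]
  have hlogw' : Real.log w' = Real.log |w'| := (Real.log_abs w').symm
  have hL'neg : Real.log w' < 0 := by
    rw [hlogw']; exact Real.log_neg hw'pos hw'lt1
  have hlogy : Real.log y'' = Real.log w' * Real.exp Δx := by
    have h1 : Real.exp (-x'') * Real.exp x'' = 1 := by
      rw [← Real.exp_add]; simp
    have h2 : Real.exp (-x') * Real.exp x'' = Real.exp Δx := by
      rw [← Real.exp_add, hΔxdef]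
      congr 1
      ring
    calc Real.log y''
        = Real.log y'' * (Real.exp (-x'') * Real.exp x'') := by rw [h1, mul_one]
      _ = Real.log y'' * Real.exp (-x'') * Real.exp x'' := by ring
      _ = Real.log w' * Real.exp (-x') * Real.exp x'' := by rw [hgeq']
      _ = Real.log w' * (Real.exp (-x') * Real.exp x'') := by ring
      _ = Real.log w' * Real.exp Δx := by rw [h2]
  have hLyneg : Real.log y'' < 0 :=
    hlogy ▸ mul_neg_of_neg_of_pos hL'neg (Real.exp_pos _)
  have hlogy'' : Real.log y'' = Real.log |y''| := (Real.log_abs y'').symm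
  have hy''pos : 0 < |y''| := abs_pos.2 hy''ne'
  have hLyle : Real.log y'' ≤ Real.log w' := by
    rw [hlogy]
    have h := mul_le_mul_of_nonpos_left
      (Real.one_le_exp (by linarith : (0:ℝ) ≤ Δx)) hL'neg.le
    simpa using h
  have hL'ge : Real.exp (-d) * Real.log y'' ≤ Real.log w' := by
    have h1 : Real.log w' = Real.log y'' * Real.exp (-Δx) := by
      rw [hlogy, mul_assoc, ← Real.exp_add]
      simp
    have h2 : Real.exp (-Δx) ≤ Real.exp (-d) := Real.exp_le_exp.2 (by linarith)
    rw [h1]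
    have h3 := mul_le_mul_of_nonpos_left h2 hLyneg.le
    linarith [h3]
  -- Hölder bound for Φ
  have hP2Ω : ((u', v0) : ℝ × ℝ) ∈ Ω := hKsub (hKmem u' v0 hu'r (by simp [hrpos.le]))
  have hΦP2 : (Φ (u', v0)).2 = 0 := hw0 u' hu'Icc
  have hΦH : |w'| ≤ (C : ℝ) * s ^ β := by
    have h1 := holder_dist_le hC hqΩ hP2Ω
    rw [hβnn] at h1
    have h2 : dist (((u', v') : ℝ × ℝ)) (((u', v0) : ℝ × ℝ)) = s := by
      rw [Prod.dist_eq, Real.dist_eq, Real.dist_eq, hsdef]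
      simp [abs_nonneg]
    have h3 : |w'| ≤ dist (Φ (u', v')) (Φ (u', v0)) := by
      rw [hw'def]
      calc |(Φ (u', v')).2| = dist ((Φ (u', v')).2) ((Φ (u', v0)).2) := by
            rw [hΦP2, Real.dist_eq, sub_zero]
        _ ≤ dist (Φ (u', v')) (Φ (u', v0)) := by
            rw [Prod.dist_eq]; exact le_max_right _ _
    rw [h2] at h1
    linarith
  have hlogΦ : Real.log w' ≤ A + β * Real.log s := by
    have h1 : (C : ℝ) * s ^ β ≤ ((C : ℝ) + 1) * s ^ β := by
      have := Real.rpow_nonneg hspos.le β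
      linarith [mul_le_mul_of_nonneg_right (by linarith : (C : ℝ) ≤ (C : ℝ) + 1) this]
    have h2 : Real.log |w'| ≤ Real.log (((C : ℝ) + 1) * s ^ β) :=
      Real.log_le_log hw'pos (by linarith)
    rw [Real.log_mul (by positivity) (by positivity), Real.log_rpow hspos] at h2
    rw [hlogw', hAdef]
    linarith
  -- Hölder bound for Ψ
  have hQ1 : Φ (u'', v') ∈ Φ '' Ω := mem_image_of_mem _ hu''Ω
  have hx''bound : |x''| ≤ m * r := by
    have h1 : |x''| ≤ |x'| + |Δx| := by
      calc |x''| = |x' + Δx| := by rw [hΔxdef]; ring_nf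
        _ ≤ |x'| + |Δx| := abs_add_le _ _
    have h2 : |Δx| ≤ 3 * m * ρ := abs_le.2 ⟨by linarith [hdpos], hΔu'⟩
    have h3 : |x'| ≤ m * r / 4 := by linarith [hx'w'.1, hδfδ1, hδ1mr]
    have h4 : 3 * m * ρ = m * r / 2 := by rw [hρdef]; ring
    linarith
  obtain ⟨ustar, hustar, hΦustar⟩ := hsurj x'' hx''bound
  have hustarΩ : ((ustar, v0) : ℝ × ℝ) ∈ Ω := hKsub (hmemline ustar hustar)
  have hQ2 : ((x'', (0 : ℝ)) : ℝ × ℝ) ∈ Φ '' Ω := ⟨(ustar, v0), hustarΩ, hΦustar⟩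
  have hΨH : s ≤ (C' : ℝ) * |y''| ^ β := by
    have h1 := holder_dist_le hC' hQ1 hQ2
    rw [hβnn] at h1
    have h2 : dist (Φ (u'', v')) (((x'', (0 : ℝ)) : ℝ × ℝ)) = |y''| := by
      have hΦu'' : Φ (u'', v') = ((x'', y'') : ℝ × ℝ) :=
        Prod.ext hx''def.symm hy''def.symm
      rw [hΦu'', Prod.dist_eq, Real.dist_eq, Real.dist_eq]
      simp
    have h3 : Ψ (Φ (u'', v')) = (u'', v') := hΨΦ _ hu''Ω
    have h4 : Ψ ((x'', (0 : ℝ)) : ℝ × ℝ) = (ustar, v0) := by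
      rw [← hΦustar, hΨΦ _ hustarΩ]
    have h5 : s ≤ dist (Ψ (Φ (u'', v'))) (Ψ ((x'', (0 : ℝ)) : ℝ × ℝ)) := by
      rw [h3, h4, Prod.dist_eq]
      refine le_trans ?_ (le_max_right _ _)
      rw [Real.dist_eq, hsdef]
    rw [h2] at h1
    linarith
  have hlogΨ : Real.log s ≤ A' + β * Real.log y'' := by
    have h1 : (C' : ℝ) * |y''| ^ β ≤ ((C' : ℝ) + 1) * |y''| ^ β := by
      have := Real.rpow_nonneg hy''pos.le β
      linarith [mul_le_mul_of_nonneg_right (by linarith : (C' : ℝ) ≤ (C' : ℝ) + 1) this]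
    have h2 : Real.log s ≤ Real.log (((C' : ℝ) + 1) * |y''| ^ β) :=
      Real.log_le_log hspos (by linarith)
    rw [Real.log_mul (by positivity) (by positivity), Real.log_rpow hy''pos] at h2
    rw [hlogy'', hA'def]
    linarith
  -- the contradiction
  have hchain : Real.exp (-d) * Real.log y'' ≤ A + β * A' + β ^ 2 * Real.log y'' := by
    have h1 : β * Real.log s ≤ β * (A' + β * Real.log y'') :=
      mul_le_mul_of_nonneg_left hlogΨ hβ0.le
    have h2 := hL'ge.trans hlogΦ
    ring_nf at h1 ⊢
    linarith [h1, h2]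
  have h1γ : -(A + β * A') ≤ γ * Real.log y'' := by
    rw [hγdef]
    ring_nf at hchain ⊢
    linarith [hchain]
  have hfinal : -((A + β * A') / γ) ≤ Real.log y'' := by
    rw [← neg_div, div_le_iff₀ hγpos']
    ring_nf at h1γ ⊢
    linarith [h1γ]
  have h6 : εst ≤ |y''| := by
    calc εst = Real.exp (-((A + β * A') / γ)) := hεstdef
      _ ≤ Real.exp (Real.log y'') := Real.exp_le_exp.2 hfinal
      _ = |y''| := by rw [hlogy'']; exact Real.exp_log hy''pos
  have h7 : |y''| ≤ |w'| := by
    calc |y''| = Real.exp (Real.log y'') := by rw [hlogy'']; exact (Real.exp_log hy''pos).symm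
      _ ≤ Real.exp (Real.log w') := Real.exp_le_exp.2 hLyle
      _ = |w'| := by rw [hlogw']; exact Real.exp_log hw'pos
  have h8 : |w'| < εst / 2 := by linarith [hx'w'.2, hδfδ1, hδ1εst]
  linarith
end
end
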